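/- arXiv:2508.08669 — 7 statements merged into one kernel-verified Lean document; each statement's English description precedes it below -/
import Mathlib

section
/- Let Z ⊆ ℝ^n, let α > 0, let F, G : Z → ℝ^n, and suppose G is α-strongly monotone on Z, i.e. ⟨z − z', G(z) − G(z')⟩ ≥ α‖z − z'‖₂² for all z, z' ∈ Z. If z* ∈ Z satisfies ⟨z* − z, F(z*)⟩ ≤ 0 for all z ∈ Z and z† ∈ Z satisfies ⟨z† − z, G(z†)⟩ ≤ 0 for all z ∈ Z, then α‖z* − z†‖₂ ≤ ‖F(z*) − G(z*)‖₂. -/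
/-! Testing strong monotonicity of `G` on the pair `(z*, z†)` and using the two variational
inequalities, each at the other point, gives
`α ‖z* − z†‖² ≤ ⟪z* − z†, G z* − G z†⟫ ≤ ⟪z* − z†, G z* − F z*⟫ ≤ ‖z* − z†‖ ‖F z* − G z*‖`,
and one factor `‖z* − z†‖` cancels. -/

open RealInnerProductSpace

variable {E : Type*} [NormedAddCommGroup E] [InnerProductSpace ℝ E]

lemma inner_sub_le_inner_sub_of_variationalInequality {F G : E → E} {x y : E}
    (hF : ⟪x - y, F x⟫ ≤ 0) (hG : ⟪y - x, G y⟫ ≤ 0) :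
    ⟪x - y, G x - G y⟫ ≤ ⟪x - y, G x - F x⟫ := by
  rw [← neg_sub x y, inner_neg_left] at hG
  rw [inner_sub_right, inner_sub_right]
  linarith

lemma mul_norm_le_of_mul_sq_norm_le_inner {α : ℝ} {d v : E} (h : α * ‖d‖ ^ 2 ≤ ⟪d, v⟫) :
    α * ‖d‖ ≤ ‖v‖ := by
  rcases eq_or_ne d 0 with rfl | hd
  · simp
  have hd : 0 < ‖d‖ := norm_pos_iff.mpr hd
  refine le_of_mul_le_mul_left ?_ hd
  calc ‖d‖ * (α * ‖d‖) = α * ‖d‖ ^ 2 := by ring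
    _ ≤ ⟪d, v⟫ := h
    _ ≤ ‖d‖ * ‖v‖ := real_inner_le_norm d v

theorem variational_inequality_perturbation_bound_general
    {n : ℕ} (Z : Set (EuclideanSpace ℝ (Fin n))) (α : ℝ)
    (F G : EuclideanSpace ℝ (Fin n) → EuclideanSpace ℝ (Fin n))
    (hGmono : ∀ z ∈ Z, ∀ z' ∈ Z,
      α * ‖z - z'‖ ^ 2 ≤ (inner ℝ (z - z') (G z - G z') : ℝ))
    (zstar zdag : EuclideanSpace ℝ (Fin n)) (hzstar : zstar ∈ Z) (hzdag : zdag ∈ Z)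
    (hviF : ∀ z ∈ Z, (inner ℝ (zstar - z) (F zstar) : ℝ) ≤ 0)
    (hviG : ∀ z ∈ Z, (inner ℝ (zdag - z) (G zdag) : ℝ) ≤ 0) :
    α * ‖zstar - zdag‖ ≤ ‖F zstar - G zstar‖ := by
  have key : α * ‖zstar - zdag‖ ^ 2 ≤ ⟪zstar - zdag, G zstar - F zstar⟫ :=
    (hGmono zstar hzstar zdag hzdag).trans
      (inner_sub_le_inner_sub_of_variationalInequality (hviF zdag hzdag) (hviG zstar hzstar))
  simpa only [norm_sub_rev (G zstar)] using mul_norm_le_of_mul_sq_norm_le_inner key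

/-- If `G` is `α`-strongly monotone on `Z`, `z*` solves the variational
inequality for `F` on `Z`, and `z†` solves the variational inequality for `G` on `Z`, then
`α ‖z* − z†‖ ≤ ‖F(z*) − G(z*)‖`. -/
theorem variational_inequality_perturbation_bound
    {n : ℕ} (Z : Set (EuclideanSpace ℝ (Fin n))) (α : ℝ) (hα : 0 < α)
    (F G : EuclideanSpace ℝ (Fin n) → EuclideanSpace ℝ (Fin n))
    (hGmono : ∀ z ∈ Z, ∀ z' ∈ Z,
      α * ‖z - z'‖ ^ 2 ≤ (inner ℝ (z - z') (G z - G z') : ℝ))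
    (zstar zdag : EuclideanSpace ℝ (Fin n)) (hzstar : zstar ∈ Z) (hzdag : zdag ∈ Z)
    (hviF : ∀ z ∈ Z, (inner ℝ (zstar - z) (F zstar) : ℝ) ≤ 0)
    (hviG : ∀ z ∈ Z, (inner ℝ (zdag - z) (G zdag) : ℝ) ≤ 0) :
    α * ‖zstar - zdag‖ ≤ ‖F zstar - G zstar‖ :=
  variational_inequality_perturbation_bound_general Z α F G hGmono zstar zdag hzstar hzdag hviF hviG
end

section
/- For the gradient operator F of the modified 4-player game, the monotonicity gap is independent of the payoff pair: for all z, z' ∈ Z and all payoff pairs R = (R₁, R₂) and R' = (R₁', R₂'), one has ⟨z − z', F(z; R) − F(z'; R)⟩ = ⟨z − z', F(z; R') − F(z'; R')⟩. In particular, F(·; R) is α-strongly monotone (respectively strictly monotone) on Z for one payoff pair R if and only if it is so for every payoff pair. -/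
noncomputable section

/-- `ℝⁿ` with the Euclidean norm. -/
abbrev Vec (n : ℕ) := EuclideanSpace ℝ (Fin n)

/-- The standard simplex `Δₙ = {x : xⱼ ≥ 0, ∑ⱼ xⱼ = 1}`. -/
def Δ (n : ℕ) : Set (Vec n) := {x | (∀ j, 0 ≤ x j) ∧ ∑ j, x j = 1}

/-- Matrix–vector product `M x`. -/
def mv {m n : ℕ} (M : Matrix (Fin m) (Fin n) ℝ) (x : Vec n) : Vec m :=
  WithLp.toLp 2 (fun k => ∑ j, M k j * x j)

/-- Joint strategy space of the modified 4-player game: `z = (π₁, π₂, p₁, p₂)`. -/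
abbrev Joint (a₁ a₂ : ℕ) := Vec a₁ × Vec a₂ × Vec a₂ × Vec a₁

/-- Membership in `Z = Δ_{a₁} × Δ_{a₂} × Δ_{a₂} × Δ_{a₁}`. -/
def inZ {a₁ a₂ : ℕ} (z : Joint a₁ a₂) : Prop :=
  z.1 ∈ Δ a₁ ∧ z.2.1 ∈ Δ a₂ ∧ z.2.2.1 ∈ Δ a₂ ∧ z.2.2.2 ∈ Δ a₁

/-- The standard inner product on the joint space. -/
def jip {a₁ a₂ : ℕ} (z w : Joint a₁ a₂) : ℝ :=
  (inner ℝ z.1 w.1 : ℝ) + (inner ℝ z.2.1 w.2.1 : ℝ)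
    + (inner ℝ z.2.2.1 w.2.2.1 : ℝ) + (inner ℝ z.2.2.2 w.2.2.2 : ℝ)

/-- The squared Euclidean norm on the joint space. -/
def jnormSq {a₁ a₂ : ℕ} (z : Joint a₁ a₂) : ℝ :=
  ‖z.1‖ ^ 2 + ‖z.2.1‖ ^ 2 + ‖z.2.2.1‖ ^ 2 + ‖z.2.2.2‖ ^ 2

/-- Objective `J₁(z; R) = −π₁ᵀ R₁ p₁ − D₁(p₁, π₂) + ε₁ ν₁(π₁)` of player 1. -/
def J1 {a₁ a₂ : ℕ} (ε₁ : ℝ) (ν₁ : Vec a₁ → ℝ) (D₁ : Vec a₂ → Vec a₂ → ℝ)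
    (R₁ : Matrix (Fin a₁) (Fin a₂) ℝ) (z : Joint a₁ a₂) : ℝ :=
  -(inner ℝ z.1 (mv R₁ z.2.2.1) : ℝ) - D₁ z.2.2.1 z.2.1 + ε₁ * ν₁ z.1

/-- Objective `J₂(z; R) = −π₂ᵀ R₂ p₂ − D₂(p₂, π₁) + ε₂ ν₂(π₂)` of player 2. -/
def J2 {a₁ a₂ : ℕ} (ε₂ : ℝ) (ν₂ : Vec a₂ → ℝ) (D₂ : Vec a₁ → Vec a₁ → ℝ)
    (R₂ : Matrix (Fin a₂) (Fin a₁) ℝ) (z : Joint a₁ a₂) : ℝ :=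
  -(inner ℝ z.2.1 (mv R₂ z.2.2.2) : ℝ) - D₂ z.2.2.2 z.1 + ε₂ * ν₂ z.2.1

/-- Nash equilibrium of the modified 4-player game: each of the four components minimizes
its owner's objective over its simplex, the others fixed (`J̄ᵢ = −Jᵢ` for the adversaries). -/
def IsNash {a₁ a₂ : ℕ} (ε₁ ε₂ : ℝ) (ν₁ : Vec a₁ → ℝ) (ν₂ : Vec a₂ → ℝ)
    (D₁ : Vec a₂ → Vec a₂ → ℝ) (D₂ : Vec a₁ → Vec a₁ → ℝ)
    (R₁ : Matrix (Fin a₁) (Fin a₂) ℝ) (R₂ : Matrix (Fin a₂) (Fin a₁) ℝ)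
    (z : Joint a₁ a₂) : Prop :=
  inZ z
    ∧ (∀ q ∈ Δ a₁, J1 ε₁ ν₁ D₁ R₁ z ≤ J1 ε₁ ν₁ D₁ R₁ (q, z.2.1, z.2.2.1, z.2.2.2))
    ∧ (∀ q ∈ Δ a₂, J2 ε₂ ν₂ D₂ R₂ z ≤ J2 ε₂ ν₂ D₂ R₂ (z.1, q, z.2.2.1, z.2.2.2))
    ∧ (∀ q ∈ Δ a₂, -J1 ε₁ ν₁ D₁ R₁ z ≤ -J1 ε₁ ν₁ D₁ R₁ (z.1, z.2.1, q, z.2.2.2))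
    ∧ (∀ q ∈ Δ a₁, -J2 ε₂ ν₂ D₂ R₂ z ≤ -J2 ε₂ ν₂ D₂ R₂ (z.1, z.2.1, z.2.2.1, q))

/-- The gradient operator `F(z; R)` of the modified 4-player game. -/
def Fop {a₁ a₂ : ℕ} (ε₁ ε₂ : ℝ) (ν₁ : Vec a₁ → ℝ) (ν₂ : Vec a₂ → ℝ)
    (D₁ : Vec a₂ → Vec a₂ → ℝ) (D₂ : Vec a₁ → Vec a₁ → ℝ)
    (R₁ : Matrix (Fin a₁) (Fin a₂) ℝ) (R₂ : Matrix (Fin a₂) (Fin a₁) ℝ)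
    (z : Joint a₁ a₂) : Joint a₁ a₂ :=
  (-(mv R₁ z.2.2.1) + ε₁ • gradient ν₁ z.1,
   -(mv R₂ z.2.2.2) + ε₂ • gradient ν₂ z.2.1,
   mv R₁.transpose z.1 + gradient (fun p => D₁ p z.2.1) z.2.2.1,
   mv R₂.transpose z.2.1 + gradient (fun p => D₂ p z.1) z.2.2.2)

/-- `α`-strong monotonicity of the gradient operator on `Z`. -/
def StronglyMonotoneOnZ {a₁ a₂ : ℕ} (α ε₁ ε₂ : ℝ) (ν₁ : Vec a₁ → ℝ) (ν₂ : Vec a₂ → ℝ)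
    (D₁ : Vec a₂ → Vec a₂ → ℝ) (D₂ : Vec a₁ → Vec a₁ → ℝ)
    (R₁ : Matrix (Fin a₁) (Fin a₂) ℝ) (R₂ : Matrix (Fin a₂) (Fin a₁) ℝ) : Prop :=
  ∀ z z' : Joint a₁ a₂, inZ z → inZ z' →
    α * jnormSq (z - z')
      ≤ jip (z - z') (Fop ε₁ ε₂ ν₁ ν₂ D₁ D₂ R₁ R₂ z - Fop ε₁ ε₂ ν₁ ν₂ D₁ D₂ R₁ R₂ z')

/-- Strict monotonicity of the gradient operator on `Z`. -/
def StrictlyMonotoneOnZ {a₁ a₂ : ℕ} (ε₁ ε₂ : ℝ) (ν₁ : Vec a₁ → ℝ) (ν₂ : Vec a₂ → ℝ)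
    (D₁ : Vec a₂ → Vec a₂ → ℝ) (D₂ : Vec a₁ → Vec a₁ → ℝ)
    (R₁ : Matrix (Fin a₁) (Fin a₂) ℝ) (R₂ : Matrix (Fin a₂) (Fin a₁) ℝ) : Prop :=
  ∀ z z' : Joint a₁ a₂, inZ z → inZ z' → z ≠ z' →
    0 < jip (z - z') (Fop ε₁ ε₂ ν₁ ν₂ D₁ D₂ R₁ R₂ z - Fop ε₁ ε₂ ν₁ ν₂ D₁ D₂ R₁ R₂ z')

/-- Entrywise `L∞` distance between payoff pairs. -/
def Rdist {a₁ a₂ : ℕ} (R₁ R₁' : Matrix (Fin a₁) (Fin a₂) ℝ)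
    (R₂ R₂' : Matrix (Fin a₂) (Fin a₁) ℝ) : ℝ :=
  max (⨆ kj : Fin a₁ × Fin a₂, |R₁ kj.1 kj.2 - R₁' kj.1 kj.2|)
      (⨆ kj : Fin a₂ × Fin a₁, |R₂ kj.1 kj.2 - R₂' kj.1 kj.2|)

/-!
The payoff matrices enter `F(·; R)` only through the linear map
`L_R (π₁, π₂, p₁, p₂) = (−R₁p₁, −R₂p₂, R₁ᵀπ₁, R₂ᵀπ₂)`, so `F(·; R) = F(·; 0) + L_R`.
Since `L_R` is skew-adjoint, `⟨w, L_R w⟩ = 0`, and with `w = z − z'` the monotonicity gap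
`⟨z − z', F(z; R) − F(z'; R)⟩` equals that of `F(·; 0)`.
-/

lemma mv_eq_toLpLin {m n : ℕ} (M : Matrix (Fin m) (Fin n) ℝ) (x : Vec n) :
    mv M x = Matrix.toLpLin 2 2 M x :=
  rfl

open Matrix in
lemma inner_mv_transpose {m n : ℕ} (M : Matrix (Fin m) (Fin n) ℝ) (x : Vec m) (y : Vec n) :
    inner ℝ y (mv M.transpose x) = inner ℝ x (mv M y) := by
  change Mᵀ *ᵥ x.ofLp ⬝ᵥ y.ofLp = M *ᵥ y.ofLp ⬝ᵥ x.ofLp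
  rw [mulVec_transpose, ← dotProduct_mulVec, dotProduct_comm]

lemma jip_add_right {a₁ a₂ : ℕ} (z w w' : Joint a₁ a₂) : jip z (w + w') = jip z w + jip z w' := by
  simp only [jip, Prod.fst_add, Prod.snd_add, inner_add_right]
  ring

section Payoffs

variable {a₁ a₂ : ℕ} (R₁ : Matrix (Fin a₁) (Fin a₂) ℝ) (R₂ : Matrix (Fin a₂) (Fin a₁) ℝ)

def payoffOp (z : Joint a₁ a₂) : Joint a₁ a₂ :=
  (-(mv R₁ z.2.2.1), -(mv R₂ z.2.2.2), mv R₁.transpose z.1, mv R₂.transpose z.2.1)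

lemma payoffOp_sub (z z' : Joint a₁ a₂) :
    payoffOp R₁ R₂ (z - z') = payoffOp R₁ R₂ z - payoffOp R₁ R₂ z' := by
  simp only [payoffOp, mv_eq_toLpLin, Prod.fst_sub, Prod.snd_sub, map_sub, neg_sub_neg,
    Prod.mk_sub_mk, neg_sub]

lemma jip_payoffOp_self (z : Joint a₁ a₂) : jip z (payoffOp R₁ R₂ z) = 0 := by
  simp only [jip, payoffOp, inner_neg_right, inner_mv_transpose]
  ring

lemma Fop_eq_Fop_zero_add_payoffOp {ε₁ ε₂ : ℝ} {ν₁ : Vec a₁ → ℝ} {ν₂ : Vec a₂ → ℝ}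
    {D₁ : Vec a₂ → Vec a₂ → ℝ} {D₂ : Vec a₁ → Vec a₁ → ℝ} (z : Joint a₁ a₂) :
    Fop ε₁ ε₂ ν₁ ν₂ D₁ D₂ R₁ R₂ z = Fop ε₁ ε₂ ν₁ ν₂ D₁ D₂ 0 0 z + payoffOp R₁ R₂ z := by
  simp only [Fop, payoffOp, mv_eq_toLpLin, map_zero, LinearMap.zero_apply, Matrix.transpose_zero,
    neg_zero, zero_add, Prod.mk_add_mk]
  abel_nf

end Payoffs

lemma jip_sub_Fop_sub_Fop_eq_payoffs_zero {a₁ a₂ : ℕ} (ε₁ ε₂ : ℝ) (ν₁ : Vec a₁ → ℝ)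
    (ν₂ : Vec a₂ → ℝ) (D₁ : Vec a₂ → Vec a₂ → ℝ) (D₂ : Vec a₁ → Vec a₁ → ℝ)
    (R₁ : Matrix (Fin a₁) (Fin a₂) ℝ) (R₂ : Matrix (Fin a₂) (Fin a₁) ℝ) (z z' : Joint a₁ a₂) :
    jip (z - z') (Fop ε₁ ε₂ ν₁ ν₂ D₁ D₂ R₁ R₂ z - Fop ε₁ ε₂ ν₁ ν₂ D₁ D₂ R₁ R₂ z')
      = jip (z - z') (Fop ε₁ ε₂ ν₁ ν₂ D₁ D₂ 0 0 z - Fop ε₁ ε₂ ν₁ ν₂ D₁ D₂ 0 0 z') := by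
  have hsplit : Fop ε₁ ε₂ ν₁ ν₂ D₁ D₂ R₁ R₂ z - Fop ε₁ ε₂ ν₁ ν₂ D₁ D₂ R₁ R₂ z'
      = (Fop ε₁ ε₂ ν₁ ν₂ D₁ D₂ 0 0 z - Fop ε₁ ε₂ ν₁ ν₂ D₁ D₂ 0 0 z') + payoffOp R₁ R₂ (z - z') := by
    rw [Fop_eq_Fop_zero_add_payoffOp R₁ R₂ z, Fop_eq_Fop_zero_add_payoffOp R₁ R₂ z',
      payoffOp_sub]
    abel
  rw [hsplit, jip_add_right, jip_payoffOp_self, add_zero]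

theorem monotonicity_gap_independent_of_payoffs_general
    {a₁ a₂ : ℕ}
    (ε₁ ε₂ : ℝ)
    (ν₁ : Vec a₁ → ℝ) (ν₂ : Vec a₂ → ℝ)
    (D₁ : Vec a₂ → Vec a₂ → ℝ) (D₂ : Vec a₁ → Vec a₁ → ℝ) :
    (∀ (R₁ R₁' : Matrix (Fin a₁) (Fin a₂) ℝ) (R₂ R₂' : Matrix (Fin a₂) (Fin a₁) ℝ)
        (z z' : Joint a₁ a₂), inZ z → inZ z' →
      jip (z - z') (Fop ε₁ ε₂ ν₁ ν₂ D₁ D₂ R₁ R₂ z - Fop ε₁ ε₂ ν₁ ν₂ D₁ D₂ R₁ R₂ z')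
        = jip (z - z') (Fop ε₁ ε₂ ν₁ ν₂ D₁ D₂ R₁' R₂' z - Fop ε₁ ε₂ ν₁ ν₂ D₁ D₂ R₁' R₂' z'))
    ∧ (∀ (α : ℝ) (R₁ R₁' : Matrix (Fin a₁) (Fin a₂) ℝ) (R₂ R₂' : Matrix (Fin a₂) (Fin a₁) ℝ),
        StronglyMonotoneOnZ α ε₁ ε₂ ν₁ ν₂ D₁ D₂ R₁ R₂
          ↔ StronglyMonotoneOnZ α ε₁ ε₂ ν₁ ν₂ D₁ D₂ R₁' R₂')
    ∧ (∀ (R₁ R₁' : Matrix (Fin a₁) (Fin a₂) ℝ) (R₂ R₂' : Matrix (Fin a₂) (Fin a₁) ℝ),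
        StrictlyMonotoneOnZ ε₁ ε₂ ν₁ ν₂ D₁ D₂ R₁ R₂
          ↔ StrictlyMonotoneOnZ ε₁ ε₂ ν₁ ν₂ D₁ D₂ R₁' R₂') := by
  have gap_eq : ∀ R₁ R₁' R₂ R₂' (z z' : Joint a₁ a₂),
      jip (z - z') (Fop ε₁ ε₂ ν₁ ν₂ D₁ D₂ R₁ R₂ z - Fop ε₁ ε₂ ν₁ ν₂ D₁ D₂ R₁ R₂ z')
        = jip (z - z') (Fop ε₁ ε₂ ν₁ ν₂ D₁ D₂ R₁' R₂' z - Fop ε₁ ε₂ ν₁ ν₂ D₁ D₂ R₁' R₂' z') :=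
    fun R₁ R₁' R₂ R₂' z z' => (jip_sub_Fop_sub_Fop_eq_payoffs_zero ..).trans
      (jip_sub_Fop_sub_Fop_eq_payoffs_zero ..).symm
  refine ⟨fun R₁ R₁' R₂ R₂' z z' _ _ => gap_eq R₁ R₁' R₂ R₂' z z', fun α R₁ R₁' R₂ R₂' => ?_,
    fun R₁ R₁' R₂ R₂' => ?_⟩
  · simp only [StronglyMonotoneOnZ, gap_eq R₁ R₁' R₂ R₂']
  · simp only [StrictlyMonotoneOnZ, gap_eq R₁ R₁' R₂ R₂']

/-- The monotonicity gap of the gradient operator of the modified 4-player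
game is independent of the payoff pair; in particular `F(·; R)` is `α`-strongly monotone
(resp. strictly monotone) on `Z` for one payoff pair iff it is so for every payoff pair. -/
theorem monotonicity_gap_independent_of_payoffs
    {a₁ a₂ : ℕ} (ha₁ : 1 ≤ a₁) (ha₂ : 1 ≤ a₂)
    (ε₁ ε₂ : ℝ) (hε₁ : 0 < ε₁) (hε₂ : 0 < ε₂)
    (ν₁ : Vec a₁ → ℝ) (ν₂ : Vec a₂ → ℝ)
    (D₁ : Vec a₂ → Vec a₂ → ℝ) (D₂ : Vec a₁ → Vec a₁ → ℝ)
    (hν₁ : Differentiable ℝ ν₁) (hν₂ : Differentiable ℝ ν₂)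
    (hD₁ : Differentiable ℝ (fun x : Vec a₂ × Vec a₂ => D₁ x.1 x.2))
    (hD₂ : Differentiable ℝ (fun x : Vec a₁ × Vec a₁ => D₂ x.1 x.2)) :
    (∀ (R₁ R₁' : Matrix (Fin a₁) (Fin a₂) ℝ) (R₂ R₂' : Matrix (Fin a₂) (Fin a₁) ℝ)
        (z z' : Joint a₁ a₂), inZ z → inZ z' →
      jip (z - z') (Fop ε₁ ε₂ ν₁ ν₂ D₁ D₂ R₁ R₂ z - Fop ε₁ ε₂ ν₁ ν₂ D₁ D₂ R₁ R₂ z')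
        = jip (z - z') (Fop ε₁ ε₂ ν₁ ν₂ D₁ D₂ R₁' R₂' z - Fop ε₁ ε₂ ν₁ ν₂ D₁ D₂ R₁' R₂' z'))
    ∧ (∀ (α : ℝ) (R₁ R₁' : Matrix (Fin a₁) (Fin a₂) ℝ) (R₂ R₂' : Matrix (Fin a₂) (Fin a₁) ℝ),
        StronglyMonotoneOnZ α ε₁ ε₂ ν₁ ν₂ D₁ D₂ R₁ R₂
          ↔ StronglyMonotoneOnZ α ε₁ ε₂ ν₁ ν₂ D₁ D₂ R₁' R₂')
    ∧ (∀ (R₁ R₁' : Matrix (Fin a₁) (Fin a₂) ℝ) (R₂ R₂' : Matrix (Fin a₂) (Fin a₁) ℝ),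
        StrictlyMonotoneOnZ ε₁ ε₂ ν₁ ν₂ D₁ D₂ R₁ R₂
          ↔ StrictlyMonotoneOnZ ε₁ ε₂ ν₁ ν₂ D₁ D₂ R₁' R₂') :=
  monotonicity_gap_independent_of_payoffs_general ε₁ ε₂ ν₁ ν₂ D₁ D₂
end
end

section
/- Suppose the gradient operator of the modified 4-player game is α-strongly monotone on Z for every payoff pair. Let R and R' be two payoff pairs and let z* = (π₁*, π₂*, p₁*, p₂*) be a Nash equilibrium of the game with payoff pair R and z† = (π₁†, π₂†, p₁†, p₂†) a Nash equilibrium of the game with payoff pair R'. Then ‖z* − z†‖₂ ≤ 2(√a₁ + √a₂)‖R − R'‖_∞ / α; in particular ‖(π₁*, π₂*) − (π₁†, π₂†)‖₂ ≤ 2(√a₁ + √a₂)‖R − R'‖_∞ / α. -/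
/-!
The equilibrium conditions are first-order optimality conditions on simplices, so an
equilibrium `z` of the game with payoffs `R` solves the variational inequality
`⟨z' - z, F(z; R)⟩ ≥ 0` for all `z' ∈ Z`. Adding these inequalities for `z*` and `z†` to the
strong monotonicity of `F(·; R)` gives `α‖z* - z†‖² ≤ ⟨z* - z†, F(z†; R') - F(z†; R)⟩`. In that
difference the regularizers and the `Dᵢ` cancel, and each remaining block is `(Rᵢ - Rᵢ')` or its
transpose applied to a point of a simplex, of norm at most `√aⱼ ‖R - R'‖_∞`.
-/

noncomputable section

open scoped RealInnerProductSpace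

theorem IsMinOn.inner_sub_gradient_nonneg {E : Type*} [NormedAddCommGroup E]
    [InnerProductSpace ℝ E] [CompleteSpace E] {f : E → ℝ} {s : Set E} {g x y : E}
    (hmin : IsMinOn f s x) (hs : Convex ℝ s) (hx : x ∈ s) (hy : y ∈ s)
    (hf : HasGradientAt f g x) : 0 ≤ ⟪y - x, g⟫ := by
  rw [real_inner_comm]
  exact hmin.localize.hasFDerivWithinAt_nonneg
    (hasGradientAt_iff_hasFDerivAt.mp hf).hasFDerivWithinAt
    (sub_mem_posTangentConeAt_of_segment_subset (hs.segment_subset hx hy))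

section Gradients

variable {E : Type*} [NormedAddCommGroup E] [InnerProductSpace ℝ E] [CompleteSpace E]

theorem hasGradientAt_inner_const (c x : E) : HasGradientAt (⟪c, ·⟫) c x :=
  hasGradientAt_iff_hasFDerivAt.mpr (InnerProductSpace.toDual ℝ E c).hasFDerivAt

theorem hasGradientAt_neg_inner_sub_add_smul (c : E) (K ε : ℝ) {ν : E → ℝ} {x : E}
    (hν : DifferentiableAt ℝ ν x) :
    HasGradientAt (fun π => -⟪π, c⟫ - K + ε * ν π) (-c + ε • gradient ν x) x := by
  have hc := hasGradientAt_iff_hasFDerivAt.mp (hasGradientAt_inner_const c x)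
  have hν' := hasGradientAt_iff_hasFDerivAt.mp hν.hasGradientAt
  rw [hasGradientAt_iff_hasFDerivAt, map_add, map_neg, map_smulₛₗ]
  exact ((hc.neg.sub_const K).add (hν'.const_mul ε)).congr_of_eventuallyEq
    (.of_forall fun π => by simp [real_inner_comm c])

theorem hasGradientAt_inner_add_sub (c : E) (K : ℝ) {D : E → ℝ} {x : E}
    (hD : DifferentiableAt ℝ D x) :
    HasGradientAt (fun p => ⟪c, p⟫ + D p - K) (c + gradient D x) x := by
  have hc := hasGradientAt_iff_hasFDerivAt.mp (hasGradientAt_inner_const c x)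
  have hD' := hasGradientAt_iff_hasFDerivAt.mp hD.hasGradientAt
  rw [hasGradientAt_iff_hasFDerivAt, map_add]
  exact (hc.add hD').sub_const K

end Gradients

theorem convex_Δ (n : ℕ) : Convex ℝ (Δ n) := by
  rintro x ⟨hx₀, hx₁⟩ y ⟨hy₀, hy₁⟩ s t hs ht hst
  refine ⟨fun j => ?_, ?_⟩
  · show 0 ≤ s * x j + t * y j
    have := hx₀ j; have := hy₀ j
    positivity
  · show ∑ j, (s * x j + t * y j) = 1
    rw [Finset.sum_add_distrib, ← Finset.mul_sum, ← Finset.mul_sum, hx₁, hy₁, mul_one, mul_one,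
      hst]

theorem inner_mv {m n : ℕ} (M : Matrix (Fin m) (Fin n) ℝ) (x : Vec m) (y : Vec n) :
    ⟪x, mv M y⟫ = ⟪mv M.transpose x, y⟫ := by
  simp only [PiLp.inner_apply, RCLike.inner_apply, conj_trivial, mv, Matrix.transpose_apply,
    Finset.mul_sum, Finset.sum_mul]
  rw [Finset.sum_comm]
  exact Finset.sum_congr rfl fun j _ => Finset.sum_congr rfl fun k _ => by ring

theorem hasGradientAt_adversary_objective {m n : ℕ} (M : Matrix (Fin m) (Fin n) ℝ) (π : Vec m)
    (K : ℝ) {D : Vec n → ℝ} {p : Vec n} (hD : DifferentiableAt ℝ D p) :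
    HasGradientAt (fun q => -(-⟪π, mv M q⟫ - D q + K)) (mv M.transpose π + gradient D p) p := by
  have hobj : (fun q => -(-⟪π, mv M q⟫ - D q + K)) = fun q => ⟪mv M.transpose π, q⟫ + D q - K := by
    funext q
    rw [inner_mv]
    ring
  rw [hobj]
  exact hasGradientAt_inner_add_sub _ K hD

theorem abs_mv_sub_mv_apply_le {m n : ℕ} {M M' : Matrix (Fin m) (Fin n) ℝ} {x : Vec n} {d : ℝ}
    (hx : x ∈ Δ n) (hd : ∀ k j, |M k j - M' k j| ≤ d) (k : Fin m) :
    |(mv M x - mv M' x) k| ≤ d := by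
  have hk : (mv M x - mv M' x) k = ∑ j, (M k j - M' k j) * x j := by
    simp [mv, sub_mul, Finset.sum_sub_distrib]
  calc |(mv M x - mv M' x) k| ≤ ∑ j, |(M k j - M' k j) * x j| := by
        rw [hk]; exact Finset.abs_sum_le_sum_abs _ _
    _ ≤ ∑ j, d * x j := by
        gcongr with j
        rw [abs_mul, abs_of_nonneg (hx.1 j)]
        exact mul_le_mul_of_nonneg_right (hd k j) (hx.1 j)
    _ = d := by rw [← Finset.mul_sum, hx.2, mul_one]

theorem EuclideanSpace.norm_le_sqrt_card_mul {ι : Type*} [Fintype ι] {v : EuclideanSpace ℝ ι}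
    {d : ℝ} (hd₀ : 0 ≤ d) (hd : ∀ i, |v i| ≤ d) : ‖v‖ ≤ √(Fintype.card ι) * d := by
  rw [EuclideanSpace.norm_eq, ← Real.sqrt_sq hd₀, ← Real.sqrt_mul (Nat.cast_nonneg _)]
  gcongr
  calc ∑ i, ‖v i‖ ^ 2 ≤ ∑ _i : ι, d ^ 2 := by
        gcongr with i
        rw [Real.norm_eq_abs]
        exact hd i
    _ = Fintype.card ι * d ^ 2 := by simp

theorem norm_mv_sub_mv_le {m n : ℕ} {M M' : Matrix (Fin m) (Fin n) ℝ} {x : Vec n} {d : ℝ}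
    (hx : x ∈ Δ n) (hd₀ : 0 ≤ d) (hd : ∀ k j, |M k j - M' k j| ≤ d) :
    ‖mv M x - mv M' x‖ ≤ √m * d := by
  simpa using EuclideanSpace.norm_le_sqrt_card_mul hd₀ (abs_mv_sub_mv_apply_le hx hd)

theorem abs_sub_le_Rdist_left {a₁ a₂ : ℕ} (R₁ R₁' : Matrix (Fin a₁) (Fin a₂) ℝ)
    (R₂ R₂' : Matrix (Fin a₂) (Fin a₁) ℝ) (k : Fin a₁) (j : Fin a₂) :
    |R₁ k j - R₁' k j| ≤ Rdist R₁ R₁' R₂ R₂' :=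
  (le_ciSup (f := fun kj : Fin a₁ × Fin a₂ => |R₁ kj.1 kj.2 - R₁' kj.1 kj.2|)
    (Set.finite_range _).bddAbove (k, j)).trans (le_max_left _ _)

theorem abs_sub_le_Rdist_right {a₁ a₂ : ℕ} (R₁ R₁' : Matrix (Fin a₁) (Fin a₂) ℝ)
    (R₂ R₂' : Matrix (Fin a₂) (Fin a₁) ℝ) (k : Fin a₂) (j : Fin a₁) :
    |R₂ k j - R₂' k j| ≤ Rdist R₁ R₁' R₂ R₂' :=
  (le_ciSup (f := fun kj : Fin a₂ × Fin a₁ => |R₂ kj.1 kj.2 - R₂' kj.1 kj.2|)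
    (Set.finite_range _).bddAbove (k, j)).trans (le_max_right _ _)

theorem Rdist_nonneg {a₁ a₂ : ℕ} (R₁ R₁' : Matrix (Fin a₁) (Fin a₂) ℝ)
    (R₂ R₂' : Matrix (Fin a₂) (Fin a₁) ℝ) : 0 ≤ Rdist R₁ R₁' R₂ R₂' :=
  (Real.iSup_nonneg fun _ => abs_nonneg _).trans (le_max_left _ _)

section JointSpace

variable {a₁ a₂ : ℕ}

def jnormSum (w : Joint a₁ a₂) : ℝ := ‖w.1‖ + ‖w.2.1‖ + ‖w.2.2.1‖ + ‖w.2.2.2‖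

theorem jip_sub_left (z z' w : Joint a₁ a₂) : jip (z - z') w = jip z w - jip z' w := by
  simp only [jip, Prod.fst_sub, Prod.snd_sub, inner_sub_left]
  ring

theorem jip_sub_right (w z z' : Joint a₁ a₂) : jip w (z - z') = jip w z - jip w z' := by
  simp only [jip, Prod.fst_sub, Prod.snd_sub, inner_sub_right]
  ring

theorem jnormSq_nonneg (w : Joint a₁ a₂) : 0 ≤ jnormSq w := by
  unfold jnormSq
  positivity

theorem jip_le_sqrt_jnormSq_mul_jnormSum (w F : Joint a₁ a₂) :
    jip w F ≤ √(jnormSq w) * jnormSum F := by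
  set N := √(jnormSq w)
  have le_N : ∀ {n} (u : Vec n), ‖u‖ ^ 2 ≤ jnormSq w → ‖u‖ ≤ N :=
    fun u h => (Real.le_sqrt (norm_nonneg u) (jnormSq_nonneg w)).mpr h
  have inner_le : ∀ {n} (u v : Vec n), ‖u‖ ≤ N → ⟪u, v⟫ ≤ N * ‖v‖ := fun u v hu =>
    (real_inner_le_norm u v).trans (mul_le_mul_of_nonneg_right hu (norm_nonneg v))
  have h₁ := sq_nonneg ‖w.1‖
  have h₂ := sq_nonneg ‖w.2.1‖
  have h₃ := sq_nonneg ‖w.2.2.1‖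
  have h₄ := sq_nonneg ‖w.2.2.2‖
  unfold jip jnormSum
  linarith [inner_le w.1 F.1 (le_N _ (by unfold jnormSq; linarith)),
    inner_le w.2.1 F.2.1 (le_N _ (by unfold jnormSq; linarith)),
    inner_le w.2.2.1 F.2.2.1 (le_N _ (by unfold jnormSq; linarith)),
    inner_le w.2.2.2 F.2.2.2 (le_N _ (by unfold jnormSq; linarith))]

end JointSpace

section Game

variable {a₁ a₂ : ℕ} {ε₁ ε₂ : ℝ} {ν₁ : Vec a₁ → ℝ} {ν₂ : Vec a₂ → ℝ}
  {D₁ : Vec a₂ → Vec a₂ → ℝ} {D₂ : Vec a₁ → Vec a₁ → ℝ}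
  {R₁ R₁' : Matrix (Fin a₁) (Fin a₂) ℝ} {R₂ R₂' : Matrix (Fin a₂) (Fin a₁) ℝ}

theorem IsNash.jip_Fop_nonneg {z z' : Joint a₁ a₂}
    (hν₁ : Differentiable ℝ ν₁) (hν₂ : Differentiable ℝ ν₂)
    (hD₁ : Differentiable ℝ (fun x : Vec a₂ × Vec a₂ => D₁ x.1 x.2))
    (hD₂ : Differentiable ℝ (fun x : Vec a₁ × Vec a₁ => D₂ x.1 x.2))
    (hz : IsNash ε₁ ε₂ ν₁ ν₂ D₁ D₂ R₁ R₂ z) (hz' : inZ z') :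
    0 ≤ jip (z' - z) (Fop ε₁ ε₂ ν₁ ν₂ D₁ D₂ R₁ R₂ z) := by
  obtain ⟨⟨h₁, h₂, h₃, h₄⟩, hmin₁, hmin₂, hmin₃, hmin₄⟩ := hz
  obtain ⟨h₁', h₂', h₃', h₄'⟩ := hz'
  have hD₁' : ∀ π, Differentiable ℝ (D₁ · π) := fun π =>
    hD₁.comp (differentiable_id.prodMk (differentiable_const π))
  have hD₂' : ∀ π, Differentiable ℝ (D₂ · π) := fun π =>
    hD₂.comp (differentiable_id.prodMk (differentiable_const π))
  unfold jip Fop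
  refine add_nonneg (add_nonneg (add_nonneg ?_ ?_) ?_) ?_
  · exact (isMinOn_iff.mpr hmin₁).inner_sub_gradient_nonneg (convex_Δ _) h₁ h₁'
      (hasGradientAt_neg_inner_sub_add_smul _ _ _ (hν₁ _))
  · exact (isMinOn_iff.mpr hmin₂).inner_sub_gradient_nonneg (convex_Δ _) h₂ h₂'
      (hasGradientAt_neg_inner_sub_add_smul _ _ _ (hν₂ _))
  · exact (isMinOn_iff.mpr hmin₃).inner_sub_gradient_nonneg (convex_Δ _) h₃ h₃'
      (hasGradientAt_adversary_objective _ _ _ (hD₁' _ _))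
  · exact (isMinOn_iff.mpr hmin₄).inner_sub_gradient_nonneg (convex_Δ _) h₄ h₄'
      (hasGradientAt_adversary_objective _ _ _ (hD₂' _ _))

theorem Fop_sub_Fop (z : Joint a₁ a₂) :
    Fop ε₁ ε₂ ν₁ ν₂ D₁ D₂ R₁' R₂' z - Fop ε₁ ε₂ ν₁ ν₂ D₁ D₂ R₁ R₂ z
      = (mv R₁ z.2.2.1 - mv R₁' z.2.2.1, mv R₂ z.2.2.2 - mv R₂' z.2.2.2,
          mv R₁'.transpose z.1 - mv R₁.transpose z.1,
          mv R₂'.transpose z.2.1 - mv R₂.transpose z.2.1) := by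
  simp only [Fop, Prod.mk_sub_mk, Prod.mk.injEq]
  refine ⟨?_, ?_, ?_, ?_⟩ <;> abel

theorem jnormSum_Fop_sub_Fop_le {z : Joint a₁ a₂} (hz : inZ z) :
    jnormSum (Fop ε₁ ε₂ ν₁ ν₂ D₁ D₂ R₁' R₂' z - Fop ε₁ ε₂ ν₁ ν₂ D₁ D₂ R₁ R₂ z)
      ≤ 2 * (√a₁ + √a₂) * Rdist R₁ R₁' R₂ R₂' := by
  obtain ⟨h₁, h₂, h₃, h₄⟩ := hz
  have hd₀ := Rdist_nonneg R₁ R₁' R₂ R₂'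
  have hd₁ := abs_sub_le_Rdist_left R₁ R₁' R₂ R₂'
  have hd₂ := abs_sub_le_Rdist_right R₁ R₁' R₂ R₂'
  have hd₁' : ∀ k j, |R₁'.transpose k j - R₁.transpose k j| ≤ Rdist R₁ R₁' R₂ R₂' :=
    fun k j => by rw [Matrix.transpose_apply, Matrix.transpose_apply, abs_sub_comm]; exact hd₁ j k
  have hd₂' : ∀ k j, |R₂'.transpose k j - R₂.transpose k j| ≤ Rdist R₁ R₁' R₂ R₂' :=
    fun k j => by rw [Matrix.transpose_apply, Matrix.transpose_apply, abs_sub_comm]; exact hd₂ j k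
  rw [Fop_sub_Fop, jnormSum]
  linarith [norm_mv_sub_mv_le h₃ hd₀ hd₁, norm_mv_sub_mv_le h₄ hd₀ hd₂,
    norm_mv_sub_mv_le h₁ hd₀ hd₁', norm_mv_sub_mv_le h₂ hd₀ hd₂']

theorem StronglyMonotoneOnZ.mul_jnormSq_le {α : ℝ} {z z' : Joint a₁ a₂}
    (hmono : StronglyMonotoneOnZ α ε₁ ε₂ ν₁ ν₂ D₁ D₂ R₁ R₂) (hz : inZ z) (hz' : inZ z')
    (hVI : 0 ≤ jip (z' - z) (Fop ε₁ ε₂ ν₁ ν₂ D₁ D₂ R₁ R₂ z))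
    (hVI' : 0 ≤ jip (z - z') (Fop ε₁ ε₂ ν₁ ν₂ D₁ D₂ R₁' R₂' z')) :
    α * jnormSq (z - z')
      ≤ jip (z - z') (Fop ε₁ ε₂ ν₁ ν₂ D₁ D₂ R₁' R₂' z' - Fop ε₁ ε₂ ν₁ ν₂ D₁ D₂ R₁ R₂ z') := by
  have h := hmono z z' hz hz'
  simp only [jip_sub_left, jip_sub_right] at h hVI hVI' ⊢
  linarith

end Game

theorem le_div_of_mul_sq_le_mul {α N C : ℝ} (hα : 0 < α) (hN : 0 ≤ N) (hC : 0 ≤ C)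
    (h : α * N ^ 2 ≤ N * C) : N ≤ C / α := by
  rw [le_div_iff₀ hα]
  rcases hN.eq_or_lt with rfl | hN
  · simpa using hC
  · nlinarith

theorem nash_lipschitz_in_payoffs_general
    {a₁ a₂ : ℕ}
    (ε₁ ε₂ : ℝ) (α : ℝ) (hα : 0 < α)
    (ν₁ : Vec a₁ → ℝ) (ν₂ : Vec a₂ → ℝ)
    (D₁ : Vec a₂ → Vec a₂ → ℝ) (D₂ : Vec a₁ → Vec a₁ → ℝ)
    (hν₁ : Differentiable ℝ ν₁) (hν₂ : Differentiable ℝ ν₂)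
    (hD₁ : Differentiable ℝ (fun x : Vec a₂ × Vec a₂ => D₁ x.1 x.2))
    (hD₂ : Differentiable ℝ (fun x : Vec a₁ × Vec a₁ => D₂ x.1 x.2))
    (hmono : ∀ (R₁ : Matrix (Fin a₁) (Fin a₂) ℝ) (R₂ : Matrix (Fin a₂) (Fin a₁) ℝ),
      StronglyMonotoneOnZ α ε₁ ε₂ ν₁ ν₂ D₁ D₂ R₁ R₂)
    (R₁ R₁' : Matrix (Fin a₁) (Fin a₂) ℝ) (R₂ R₂' : Matrix (Fin a₂) (Fin a₁) ℝ)
    (zstar zdag : Joint a₁ a₂)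
    (hzstar : IsNash ε₁ ε₂ ν₁ ν₂ D₁ D₂ R₁ R₂ zstar)
    (hzdag : IsNash ε₁ ε₂ ν₁ ν₂ D₁ D₂ R₁' R₂' zdag) :
    Real.sqrt (jnormSq (zstar - zdag))
      ≤ 2 * (Real.sqrt a₁ + Real.sqrt a₂) * Rdist R₁ R₁' R₂ R₂' / α
    ∧ Real.sqrt (‖zstar.1 - zdag.1‖ ^ 2 + ‖zstar.2.1 - zdag.2.1‖ ^ 2)
      ≤ 2 * (Real.sqrt a₁ + Real.sqrt a₂) * Rdist R₁ R₁' R₂ R₂' / α := by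
  set C := 2 * (√a₁ + √a₂) * Rdist R₁ R₁' R₂ R₂'
  set N := √(jnormSq (zstar - zdag))
  have hquad : α * N ^ 2 ≤ N * C := by
    rw [Real.sq_sqrt (jnormSq_nonneg _)]
    calc α * jnormSq (zstar - zdag)
        ≤ jip (zstar - zdag) (Fop ε₁ ε₂ ν₁ ν₂ D₁ D₂ R₁' R₂' zdag
            - Fop ε₁ ε₂ ν₁ ν₂ D₁ D₂ R₁ R₂ zdag) :=
          (hmono R₁ R₂).mul_jnormSq_le hzstar.1 hzdag.1
            (hzstar.jip_Fop_nonneg hν₁ hν₂ hD₁ hD₂ hzdag.1)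
            (hzdag.jip_Fop_nonneg hν₁ hν₂ hD₁ hD₂ hzstar.1)
      _ ≤ N * jnormSum (Fop ε₁ ε₂ ν₁ ν₂ D₁ D₂ R₁' R₂' zdag
            - Fop ε₁ ε₂ ν₁ ν₂ D₁ D₂ R₁ R₂ zdag) := jip_le_sqrt_jnormSq_mul_jnormSum _ _
      _ ≤ N * C := mul_le_mul_of_nonneg_left (jnormSum_Fop_sub_Fop_le hzdag.1) (Real.sqrt_nonneg _)
  have hC : 0 ≤ C := mul_nonneg (by positivity) (Rdist_nonneg R₁ R₁' R₂ R₂')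
  have hN : N ≤ C / α := le_div_of_mul_sq_le_mul hα (Real.sqrt_nonneg _) hC hquad
  refine ⟨hN, le_trans (Real.sqrt_le_sqrt ?_) hN⟩
  simp only [jnormSq, Prod.fst_sub, Prod.snd_sub]
  linarith [sq_nonneg ‖zstar.2.2.1 - zdag.2.2.1‖, sq_nonneg ‖zstar.2.2.2 - zdag.2.2.2‖]

/-- If the gradient operator of the modified 4-player game is `α`-strongly
monotone on `Z` for every payoff pair, then Nash equilibria for payoff pairs `R` and `R'`
satisfy `‖z* − z†‖₂ ≤ 2(√a₁ + √a₂)‖R − R'‖_∞ / α`, and in particular the policy parts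
satisfy the same bound. -/
theorem nash_lipschitz_in_payoffs
    {a₁ a₂ : ℕ} (ha₁ : 1 ≤ a₁) (ha₂ : 1 ≤ a₂)
    (ε₁ ε₂ : ℝ) (hε₁ : 0 < ε₁) (hε₂ : 0 < ε₂) (α : ℝ) (hα : 0 < α)
    (ν₁ : Vec a₁ → ℝ) (ν₂ : Vec a₂ → ℝ)
    (D₁ : Vec a₂ → Vec a₂ → ℝ) (D₂ : Vec a₁ → Vec a₁ → ℝ)
    (hν₁ : Differentiable ℝ ν₁) (hν₂ : Differentiable ℝ ν₂)
    (hD₁ : Differentiable ℝ (fun x : Vec a₂ × Vec a₂ => D₁ x.1 x.2))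
    (hD₂ : Differentiable ℝ (fun x : Vec a₁ × Vec a₁ => D₂ x.1 x.2))
    (hmono : ∀ (R₁ : Matrix (Fin a₁) (Fin a₂) ℝ) (R₂ : Matrix (Fin a₂) (Fin a₁) ℝ),
      StronglyMonotoneOnZ α ε₁ ε₂ ν₁ ν₂ D₁ D₂ R₁ R₂)
    (R₁ R₁' : Matrix (Fin a₁) (Fin a₂) ℝ) (R₂ R₂' : Matrix (Fin a₂) (Fin a₁) ℝ)
    (zstar zdag : Joint a₁ a₂)
    (hzstar : IsNash ε₁ ε₂ ν₁ ν₂ D₁ D₂ R₁ R₂ zstar)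
    (hzdag : IsNash ε₁ ε₂ ν₁ ν₂ D₁ D₂ R₁' R₂' zdag) :
    Real.sqrt (jnormSq (zstar - zdag))
      ≤ 2 * (Real.sqrt a₁ + Real.sqrt a₂) * Rdist R₁ R₁' R₂ R₂' / α
    ∧ Real.sqrt (‖zstar.1 - zdag.1‖ ^ 2 + ‖zstar.2.1 - zdag.2.1‖ ^ 2)
      ≤ 2 * (Real.sqrt a₁ + Real.sqrt a₂) * Rdist R₁ R₁' R₂ R₂' / α :=
  nash_lipschitz_in_payoffs_general ε₁ ε₂ α hα ν₁ ν₂ D₁ D₂ hν₁ hν₂ hD₁ hD₂ hmono R₁ R₁' R₂ R₂' zstar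
    zdag hzstar hzdag
end
end

section
/- Suppose ν₁, ν₂ and D₁, D₂ are twice continuously differentiable on open convex sets containing the respective simplexes, and that for each i ∈ {1, 2} and every point (p, π) with p, π in (a neighborhood of) the relevant simplexes: (a) the full Hessian of D_{−i} with respect to the joint variable (p, π) is positive semidefinite; (b) ⟨w, (ε_i∇²ν_i(π) − ½∇²_{ππ}D_{−i}(p, π))w⟩ ≥ α‖w‖₂² for all w, where ∇²_{ππ}D_{−i} is the Hessian of D_{−i} in its second argument; and (c) ⟨w, ½∇²_{pp}D_{−i}(p, π)w⟩ ≥ α‖w‖₂² for all w, where ∇²_{pp}D_{−i} is the Hessian of D_{−i} in its first argument. Then for every payoff pair R, the gradient operator F(·; R) of the modified 4-player game is α-strongly monotone on Z. -/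
noncomputable section

/-!
The coupling terms `-R₁ p₁`, `R₁ᵀ π₁` (and likewise for `R₂`) form a skew-symmetric operator, so
they drop out of `⟨z - z', F z - F z'⟩`. What remains splits into one block per player `i`: the map
`(p, π) ↦ (∇_p D₋ᵢ(p, π), εᵢ ∇νᵢ(π))` on the pair `(p₋ᵢ, πᵢ)`. Along the segment from `(p', π')` to
`(p, π)`, with `u = p - p'`, `w = π - π'`, the derivative of its pairing with `(u, w)` is
`∇²D[(u, w), (u, 0)] + εᵢ ∇²νᵢ[w, w]`. Positive semidefiniteness and symmetry of the joint Hessian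
bound the mixed term `∇²D[(0, w), (u, 0)]` below by `-½ (∇²_pp D[u, u] + ∇²_ππ D[w, w])`, after
which (b) and (c) give the lower bound `α (‖u‖² + ‖w‖²)`; the mean value theorem concludes.
-/

open Set Topology

section SecondDerivative

variable {X Y : Type*} [NormedAddCommGroup X] [NormedSpace ℝ X]
  [NormedAddCommGroup Y] [NormedSpace ℝ Y]

theorem ContDiffAt.fderiv_fderiv_apply {f : X → ℝ} {x : X} (hf : ContDiffAt ℝ 2 f x) (u v : X) :
    fderiv ℝ (fun y => fderiv ℝ f y v) x u = fderiv ℝ (fderiv ℝ f) x u v := by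
  rw [fderiv_clm_apply ((hf.fderiv_right le_rfl).differentiableAt one_ne_zero)
    (differentiableAt_const v)]
  simp

theorem ContDiffAt.differentiableAt_fderiv_apply {f : X → ℝ} {x : X} (hf : ContDiffAt ℝ 2 f x)
    (v : X) : DifferentiableAt ℝ (fun y => fderiv ℝ f y v) x :=
  ((hf.fderiv_right le_rfl).differentiableAt one_ne_zero).clm_apply (differentiableAt_const v)

theorem fderiv_comp_apply_of_hasFDerivAt {f : X → ℝ} {ι : Y → X} {L : Y →L[ℝ] X} {y : Y}
    (hι : HasFDerivAt ι L y) (hf : DifferentiableAt ℝ f (ι y)) (v : Y) :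
    fderiv ℝ (f ∘ ι) y v = fderiv ℝ f (ι y) (L v) := by
  rw [(hf.hasFDerivAt.comp y hι).fderiv]
  rfl

theorem ContDiffAt.fderiv_fderiv_comp_apply {f : X → ℝ} {ι : Y → X} {L : Y →L[ℝ] X}
    (hι : ∀ y, HasFDerivAt ι L y) {y : Y} (hf : ContDiffAt ℝ 2 f (ι y)) (u v : Y) :
    fderiv ℝ (fun z => fderiv ℝ (f ∘ ι) z v) y u = fderiv ℝ (fderiv ℝ f) (ι y) (L u) (L v) := by
  have hev : (fun z => fderiv ℝ (f ∘ ι) z v) =ᶠ[𝓝 y] fun z => fderiv ℝ f (ι z) (L v) := by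
    filter_upwards [(hι y).continuousAt.tendsto.eventually (hf.eventually (by simp))] with z hz
    exact fderiv_comp_apply_of_hasFDerivAt (hι z) (hz.differentiableAt two_ne_zero) v
  rw [hev.fderiv_eq, ← hf.fderiv_fderiv_apply]
  exact fderiv_comp_apply_of_hasFDerivAt (hι y) (hf.differentiableAt_fderiv_apply (L v)) u

theorem ContinuousLinearMap.half_sub_half_le_apply_mk_zero (B : X × Y →L[ℝ] X × Y →L[ℝ] ℝ)
    {u : X} {w : Y} (hsymm : B (0, w) (u, 0) = B (u, 0) (0, w)) (hpsd : 0 ≤ B (u, w) (u, w)) :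
    B (u, 0) (u, 0) / 2 - B (0, w) (0, w) / 2 ≤ B (u, w) (u, 0) := by
  have hsplit : ((u, w) : X × Y) = (u, 0) + (0, w) := by simp
  rw [hsplit] at hpsd ⊢
  simp only [map_add, add_apply] at hpsd ⊢
  linarith

theorem Convex.le_sub_of_le_fderiv {S : Set X} (hS : Convex ℝ S) {ψ : X → ℝ}
    (hψ : ∀ z ∈ S, DifferentiableAt ℝ ψ z) {x y : X} (hx : x ∈ S) (hy : y ∈ S) {c : ℝ}
    (hc : ∀ z ∈ S, c ≤ fderiv ℝ ψ z (y - x)) : c ≤ ψ y - ψ x := by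
  have hline : ∀ s ∈ Icc (0 : ℝ) 1, HasDerivAt (fun s : ℝ => ψ (x + s • (y - x)))
      (fderiv ℝ ψ (x + s • (y - x)) (y - x)) s := by
    intro s hs
    have hL : HasDerivAt (fun s : ℝ => x + s • (y - x)) (y - x) s := by
      simpa using ((hasDerivAt_id s).smul_const (y - x)).const_add x
    exact (hψ _ (hS.add_smul_sub_mem hx hy hs)).hasFDerivAt.comp_hasDerivAt s hL
  obtain ⟨s, hs, hslope⟩ := exists_hasDerivAt_eq_slope _ _ zero_lt_one
    (fun s hs => (hline s hs).continuousAt.continuousWithinAt)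
    (fun s hs => hline s (Ioo_subset_Icc_self hs))
  have := hc _ (hS.add_smul_sub_mem hx hy (Ioo_subset_Icc_self hs))
  simpa [hslope] using this

end SecondDerivative

section Block

variable {E F : Type*} [NormedAddCommGroup E] [NormedSpace ℝ E]
  [NormedAddCommGroup F] [NormedSpace ℝ F]

theorem le_hessian_apply_mk_zero_add {ε α : ℝ} {φ : F → ℝ} {D : E → F → ℝ} {p : E} {π : F}
    (hD : ContDiffAt ℝ 2 (fun x : E × F => D x.1 x.2) (p, π)) {u : E} {w : F}
    (hjoint : 0 ≤ fderiv ℝ (fun y => fderiv ℝ (fun t : E × F => D t.1 t.2) y (u, w)) (p, π) (u, w))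
    (hb : α * ‖w‖ ^ 2
        ≤ ε * fderiv ℝ (fun y => fderiv ℝ φ y w) π w
            - (1 / 2) * fderiv ℝ (fun y => fderiv ℝ (fun t => D p t) y w) π w)
    (hc : α * ‖u‖ ^ 2 ≤ (1 / 2) * fderiv ℝ (fun y => fderiv ℝ (fun t => D t π) y u) p u) :
    α * (‖w‖ ^ 2 + ‖u‖ ^ 2)
      ≤ fderiv ℝ (fderiv ℝ (fun x : E × F => D x.1 x.2)) (p, π) (u, w) (u, 0)
        + ε * fderiv ℝ (fun y => fderiv ℝ φ y w) π w := by
  set B := fderiv ℝ (fderiv ℝ (fun x : E × F => D x.1 x.2)) (p, π)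
  have hcross : B (u, 0) (u, 0) / 2 - B (0, w) (0, w) / 2 ≤ B (u, w) (u, 0) :=
    B.half_sub_half_le_apply_mk_zero (hD.isSymmSndFDerivAt (by simp) _ _)
      (hD.fderiv_fderiv_apply (u, w) (u, w) ▸ hjoint)
  have hpp : fderiv ℝ (fun y => fderiv ℝ (fun t => D t π) y u) p u = B (u, 0) (u, 0) :=
    hD.fderiv_fderiv_comp_apply (ι := fun q => (q, π)) (L := .inl ℝ E F)
      (hasFDerivAt_prodMk_left · π) u u
  have hππ : fderiv ℝ (fun y => fderiv ℝ (fun t => D p t) y w) π w = B (0, w) (0, w) :=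
    hD.fderiv_fderiv_comp_apply (ι := fun q => (p, q)) (L := .inr ℝ E F)
      (hasFDerivAt_prodMk_right p) w w
  linarith

theorem strongMonotone_partialGradients_of_hessian_bounds {ε α : ℝ} {φ : F → ℝ}
    {D : E → F → ℝ} {U : Set E} {V : Set F} (hUo : IsOpen U) (hUc : Convex ℝ U)
    (hVo : IsOpen V) (hVc : Convex ℝ V) (hφ : ContDiffOn ℝ 2 φ V)
    (hD : ContDiffOn ℝ 2 (fun x : E × F => D x.1 x.2) (U ×ˢ V))
    (hjoint : ∀ x ∈ U ×ˢ V, ∀ h : E × F,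
      0 ≤ fderiv ℝ (fun y => fderiv ℝ (fun t : E × F => D t.1 t.2) y h) x h)
    (hb : ∀ p ∈ U, ∀ π ∈ V, ∀ w : F,
      α * ‖w‖ ^ 2
        ≤ ε * fderiv ℝ (fun y => fderiv ℝ φ y w) π w
            - (1 / 2) * fderiv ℝ (fun y => fderiv ℝ (fun t => D p t) y w) π w)
    (hc : ∀ p ∈ U, ∀ π ∈ V, ∀ u : E,
      α * ‖u‖ ^ 2 ≤ (1 / 2) * fderiv ℝ (fun y => fderiv ℝ (fun t => D t π) y u) p u)
    {p p' : E} {π π' : F} (hp : p ∈ U) (hp' : p' ∈ U) (hπ : π ∈ V) (hπ' : π' ∈ V) :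
    α * (‖π - π'‖ ^ 2 + ‖p - p'‖ ^ 2)
      ≤ ε * (fderiv ℝ φ π (π - π') - fderiv ℝ φ π' (π - π'))
        + (fderiv ℝ (fun q => D q π) p (p - p') - fderiv ℝ (fun q => D q π') p' (p - p')) := by
  set f : E × F → ℝ := fun x => D x.1 x.2
  set u := p - p'
  set w := π - π'
  have hS : IsOpen (U ×ˢ V) := hUo.prod hVo
  have hfC2 : ∀ x ∈ U ×ˢ V, ContDiffAt ℝ 2 f x := fun x hx => hD.contDiffAt (hS.mem_nhds hx)
  have hφC2 : ∀ π ∈ V, ContDiffAt ℝ 2 φ π := fun π hπ => hφ.contDiffAt (hVo.mem_nhds hπ)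
  -- `ψ (p, π) - ψ (p', π')` is the pairing of `(u, w)` with the increment of the partial gradients
  set ψ : E × F → ℝ := fun x => fderiv ℝ f x (u, 0) + ε * fderiv ℝ φ x.2 w
  have hψ : ∀ x ∈ U ×ˢ V, HasFDerivAt ψ
      (fderiv ℝ (fun y => fderiv ℝ f y (u, 0)) x
        + ε • (fderiv ℝ (fun y => fderiv ℝ φ y w) x.2).comp (ContinuousLinearMap.snd ℝ E F)) x :=
    fun x hx => ((hfC2 x hx).differentiableAt_fderiv_apply _).hasFDerivAt.add
      ((((hφC2 _ hx.2).differentiableAt_fderiv_apply w).hasFDerivAt.comp x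
        hasFDerivAt_snd).const_mul ε)
  have hψ' : ∀ x ∈ U ×ˢ V, α * (‖w‖ ^ 2 + ‖u‖ ^ 2) ≤ fderiv ℝ ψ x ((p, π) - (p', π')) := by
    rintro ⟨p₀, π₀⟩ hx
    have hf₀ := hfC2 _ hx
    have h := le_hessian_apply_mk_zero_add hf₀ (hjoint _ hx (u, w)) (hb p₀ hx.1 π₀ hx.2 w)
      (hc p₀ hx.1 π₀ hx.2 u)
    rw [(hψ _ hx).fderiv]
    rwa [← hf₀.fderiv_fderiv_apply] at h
  have key := (hUc.prod hVc).le_sub_of_le_fderiv (fun x hx => (hψ x hx).differentiableAt)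
    (mk_mem_prod hp' hπ') (mk_mem_prod hp hπ) hψ'
  have hfirst : ∀ q ∈ U, ∀ r ∈ V, fderiv ℝ (fun t => D t r) q u = fderiv ℝ f (q, r) (u, 0) :=
    fun q hq r hr => fderiv_comp_apply_of_hasFDerivAt (hasFDerivAt_prodMk_left q r)
      ((hfC2 _ ⟨hq, hr⟩).differentiableAt two_ne_zero) u
  rw [hfirst p hp π hπ, hfirst p' hp' π' hπ']
  simp only [ψ] at key
  linarith

end Block

theorem mv_eq_mulVec {m n : ℕ} (M : Matrix (Fin m) (Fin n) ℝ) (x : Vec n) :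
    mv M x = WithLp.toLp 2 (M.mulVec x.ofLp) := rfl

theorem mv_sub {m n : ℕ} (M : Matrix (Fin m) (Fin n) ℝ) (x y : Vec n) :
    mv M (x - y) = mv M x - mv M y := by
  simp [mv_eq_mulVec, Matrix.mulVec_sub]

theorem inner_mv_eq_inner_mv_transpose {m n : ℕ} (M : Matrix (Fin m) (Fin n) ℝ) (x : Vec m)
    (y : Vec n) : inner ℝ x (mv M y) = inner ℝ y (mv M.transpose x) := by
  simp [mv_eq_mulVec, EuclideanSpace.inner_eq_star_dotProduct, Matrix.dotProduct_mulVec,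
    Matrix.mulVec_transpose, dotProduct_comm]

theorem jip_sub_Fop_sub_Fop {a₁ a₂ : ℕ} (ε₁ ε₂ : ℝ) (ν₁ : Vec a₁ → ℝ) (ν₂ : Vec a₂ → ℝ)
    (D₁ : Vec a₂ → Vec a₂ → ℝ) (D₂ : Vec a₁ → Vec a₁ → ℝ)
    (R₁ : Matrix (Fin a₁) (Fin a₂) ℝ) (R₂ : Matrix (Fin a₂) (Fin a₁) ℝ) (z z' : Joint a₁ a₂) :
    jip (z - z') (Fop ε₁ ε₂ ν₁ ν₂ D₁ D₂ R₁ R₂ z - Fop ε₁ ε₂ ν₁ ν₂ D₁ D₂ R₁ R₂ z')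
      = (ε₁ * (fderiv ℝ ν₁ z.1 (z.1 - z'.1) - fderiv ℝ ν₁ z'.1 (z.1 - z'.1))
          + (fderiv ℝ (fun p => D₂ p z.1) z.2.2.2 (z.2.2.2 - z'.2.2.2)
            - fderiv ℝ (fun p => D₂ p z'.1) z'.2.2.2 (z.2.2.2 - z'.2.2.2)))
        + (ε₂ * (fderiv ℝ ν₂ z.2.1 (z.2.1 - z'.2.1) - fderiv ℝ ν₂ z'.2.1 (z.2.1 - z'.2.1))
          + (fderiv ℝ (fun p => D₁ p z.2.1) z.2.2.1 (z.2.2.1 - z'.2.2.1)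
            - fderiv ℝ (fun p => D₁ p z'.2.1) z'.2.2.1 (z.2.2.1 - z'.2.2.1))) := by
  have h₁ := inner_mv_eq_inner_mv_transpose R₁ (z.1 - z'.1) (z.2.2.1 - z'.2.2.1)
  have h₂ := inner_mv_eq_inner_mv_transpose R₂ (z.2.1 - z'.2.1) (z.2.2.2 - z'.2.2.2)
  simp only [mv_sub, inner_sub_right] at h₁ h₂
  simp only [jip, Fop, Prod.fst_sub, Prod.snd_sub, inner_sub_right, inner_add_right,
    inner_neg_right, real_inner_smul_right, inner_gradient_right, conj_trivial]
  linarith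

theorem hessian_conditions_imply_strong_monotonicity_general
    {a₁ a₂ : ℕ} (ε₁ ε₂ : ℝ) (α : ℝ)
    (ν₁ : Vec a₁ → ℝ) (ν₂ : Vec a₂ → ℝ)
    (D₁ : Vec a₂ → Vec a₂ → ℝ) (D₂ : Vec a₁ → Vec a₁ → ℝ)
    (U₁ : Set (Vec a₁)) (U₂ : Set (Vec a₂))
    (hU₁open : IsOpen U₁) (hU₁conv : Convex ℝ U₁) (hU₁sub : Δ a₁ ⊆ U₁)
    (hU₂open : IsOpen U₂) (hU₂conv : Convex ℝ U₂) (hU₂sub : Δ a₂ ⊆ U₂)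
    (hν₁ : ContDiffOn ℝ 2 ν₁ U₁) (hν₂ : ContDiffOn ℝ 2 ν₂ U₂)
    (hD₁ : ContDiffOn ℝ 2 (fun x : Vec a₂ × Vec a₂ => D₁ x.1 x.2) (U₂ ×ˢ U₂))
    (hD₂ : ContDiffOn ℝ 2 (fun x : Vec a₁ × Vec a₁ => D₂ x.1 x.2) (U₁ ×ˢ U₁))
    -- (a) joint Hessians of `D₂` and `D₁` are positive semidefinite:
    (hjoint₂ : ∀ x ∈ U₁ ×ˢ U₁, ∀ w : Vec a₁ × Vec a₁,
      0 ≤ fderiv ℝ (fun y => fderiv ℝ (fun t : Vec a₁ × Vec a₁ => D₂ t.1 t.2) y w) x w)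
    (hjoint₁ : ∀ x ∈ U₂ ×ˢ U₂, ∀ w : Vec a₂ × Vec a₂,
      0 ≤ fderiv ℝ (fun y => fderiv ℝ (fun t : Vec a₂ × Vec a₂ => D₁ t.1 t.2) y w) x w)
    -- (b) `ε₁∇²ν₁(π) − ½∇²_{ππ}D₂(p, π) ⪰ αI` and `ε₂∇²ν₂(π) − ½∇²_{ππ}D₁(p, π) ⪰ αI`:
    (hb₁ : ∀ p ∈ U₁, ∀ π ∈ U₁, ∀ w : Vec a₁,
      α * ‖w‖ ^ 2
        ≤ ε₁ * fderiv ℝ (fun y => fderiv ℝ ν₁ y w) π w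
            - (1 / 2) * fderiv ℝ (fun y => fderiv ℝ (fun t => D₂ p t) y w) π w)
    (hb₂ : ∀ p ∈ U₂, ∀ π ∈ U₂, ∀ w : Vec a₂,
      α * ‖w‖ ^ 2
        ≤ ε₂ * fderiv ℝ (fun y => fderiv ℝ ν₂ y w) π w
            - (1 / 2) * fderiv ℝ (fun y => fderiv ℝ (fun t => D₁ p t) y w) π w)
    -- (c) `½∇²_{pp}D₂(p, π) ⪰ αI` and `½∇²_{pp}D₁(p, π) ⪰ αI`:
    (hc₁ : ∀ p ∈ U₁, ∀ π ∈ U₁, ∀ w : Vec a₁,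
      α * ‖w‖ ^ 2 ≤ (1 / 2) * fderiv ℝ (fun y => fderiv ℝ (fun t => D₂ t π) y w) p w)
    (hc₂ : ∀ p ∈ U₂, ∀ π ∈ U₂, ∀ w : Vec a₂,
      α * ‖w‖ ^ 2 ≤ (1 / 2) * fderiv ℝ (fun y => fderiv ℝ (fun t => D₁ t π) y w) p w) :
    ∀ (R₁ : Matrix (Fin a₁) (Fin a₂) ℝ) (R₂ : Matrix (Fin a₂) (Fin a₁) ℝ),
      StronglyMonotoneOnZ α ε₁ ε₂ ν₁ ν₂ D₁ D₂ R₁ R₂ := by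
  rintro R₁ R₂ z z' ⟨hπ₁, hπ₂, hp₁, hp₂⟩ ⟨hπ₁', hπ₂', hp₁', hp₂'⟩
  have player₁ := strongMonotone_partialGradients_of_hessian_bounds hU₁open hU₁conv hU₁open
    hU₁conv hν₁ hD₂ hjoint₂ hb₁ hc₁ (hU₁sub hp₂) (hU₁sub hp₂') (hU₁sub hπ₁) (hU₁sub hπ₁')
  have player₂ := strongMonotone_partialGradients_of_hessian_bounds hU₂open hU₂conv hU₂open
    hU₂conv hν₂ hD₁ hjoint₁ hb₂ hc₂ (hU₂sub hp₁) (hU₂sub hp₁') (hU₂sub hπ₂) (hU₂sub hπ₂')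
  rw [jip_sub_Fop_sub_Fop]
  simp only [jnormSq, Prod.fst_sub, Prod.snd_sub]
  linarith

/-- If `ν₁, ν₂, D₁, D₂` are `C²` on open convex neighborhoods of the
simplexes, the joint Hessian of each `D_{−i}` is positive semidefinite, and
`εᵢ∇²νᵢ − ½∇²_{ππ}D_{−i} ⪰ αI` and `½∇²_{pp}D_{−i} ⪰ αI` pointwise, then for every payoff
pair the gradient operator of the modified 4-player game is `α`-strongly monotone on `Z`.
(Hessian quadratic forms are expressed as iterated directional derivatives.) -/
theorem hessian_conditions_imply_strong_monotonicity
    {a₁ a₂ : ℕ} (ha₁ : 1 ≤ a₁) (ha₂ : 1 ≤ a₂)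
    (ε₁ ε₂ : ℝ) (hε₁ : 0 < ε₁) (hε₂ : 0 < ε₂) (α : ℝ) (hα : 0 < α)
    (ν₁ : Vec a₁ → ℝ) (ν₂ : Vec a₂ → ℝ)
    (D₁ : Vec a₂ → Vec a₂ → ℝ) (D₂ : Vec a₁ → Vec a₁ → ℝ)
    (U₁ : Set (Vec a₁)) (U₂ : Set (Vec a₂))
    (hU₁open : IsOpen U₁) (hU₁conv : Convex ℝ U₁) (hU₁sub : Δ a₁ ⊆ U₁)
    (hU₂open : IsOpen U₂) (hU₂conv : Convex ℝ U₂) (hU₂sub : Δ a₂ ⊆ U₂)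
    (hν₁ : ContDiffOn ℝ 2 ν₁ U₁) (hν₂ : ContDiffOn ℝ 2 ν₂ U₂)
    (hD₁ : ContDiffOn ℝ 2 (fun x : Vec a₂ × Vec a₂ => D₁ x.1 x.2) (U₂ ×ˢ U₂))
    (hD₂ : ContDiffOn ℝ 2 (fun x : Vec a₁ × Vec a₁ => D₂ x.1 x.2) (U₁ ×ˢ U₁))
    -- (a) joint Hessians of `D₂` and `D₁` are positive semidefinite:
    (hjoint₂ : ∀ x ∈ U₁ ×ˢ U₁, ∀ w : Vec a₁ × Vec a₁,
      0 ≤ fderiv ℝ (fun y => fderiv ℝ (fun t : Vec a₁ × Vec a₁ => D₂ t.1 t.2) y w) x w)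
    (hjoint₁ : ∀ x ∈ U₂ ×ˢ U₂, ∀ w : Vec a₂ × Vec a₂,
      0 ≤ fderiv ℝ (fun y => fderiv ℝ (fun t : Vec a₂ × Vec a₂ => D₁ t.1 t.2) y w) x w)
    -- (b) `ε₁∇²ν₁(π) − ½∇²_{ππ}D₂(p, π) ⪰ αI` and `ε₂∇²ν₂(π) − ½∇²_{ππ}D₁(p, π) ⪰ αI`:
    (hb₁ : ∀ p ∈ U₁, ∀ π ∈ U₁, ∀ w : Vec a₁,
      α * ‖w‖ ^ 2
        ≤ ε₁ * fderiv ℝ (fun y => fderiv ℝ ν₁ y w) π w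
            - (1 / 2) * fderiv ℝ (fun y => fderiv ℝ (fun t => D₂ p t) y w) π w)
    (hb₂ : ∀ p ∈ U₂, ∀ π ∈ U₂, ∀ w : Vec a₂,
      α * ‖w‖ ^ 2
        ≤ ε₂ * fderiv ℝ (fun y => fderiv ℝ ν₂ y w) π w
            - (1 / 2) * fderiv ℝ (fun y => fderiv ℝ (fun t => D₁ p t) y w) π w)
    -- (c) `½∇²_{pp}D₂(p, π) ⪰ αI` and `½∇²_{pp}D₁(p, π) ⪰ αI`:
    (hc₁ : ∀ p ∈ U₁, ∀ π ∈ U₁, ∀ w : Vec a₁,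
      α * ‖w‖ ^ 2 ≤ (1 / 2) * fderiv ℝ (fun y => fderiv ℝ (fun t => D₂ t π) y w) p w)
    (hc₂ : ∀ p ∈ U₂, ∀ π ∈ U₂, ∀ w : Vec a₂,
      α * ‖w‖ ^ 2 ≤ (1 / 2) * fderiv ℝ (fun y => fderiv ℝ (fun t => D₁ t π) y w) p w) :
    ∀ (R₁ : Matrix (Fin a₁) (Fin a₂) ℝ) (R₂ : Matrix (Fin a₂) (Fin a₁) ℝ),
      StronglyMonotoneOnZ α ε₁ ε₂ ν₁ ν₂ D₁ D₂ R₁ R₂ :=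
  hessian_conditions_imply_strong_monotonicity_general ε₁ ε₂ α ν₁ ν₂ D₁ D₂ U₁ U₂ hU₁open hU₁conv
    hU₁sub hU₂open hU₂conv hU₂sub hν₁ hν₂ hD₁ hD₂ hjoint₂ hjoint₁ hb₁ hb₂ hc₁ hc₂
end
end

section
/- Let R and R' be payoff pairs, let z* = (π₁*, π₂*, p₁*, p₂*) be a Nash equilibrium of the modified 4-player game with payoff pair R, and let z† = (π₁†, π₂†, p₁†, p₂†) be a Nash equilibrium with payoff pair R'. Then for each i ∈ {1, 2}: J_i(z*; R) − J_i(z†; R') ≤ (π_i†)ᵀ(R_i' − R_i)p_i* − D_i(p_i*, π_{−i}*) + D_i(p_i*, π_{−i}†). -/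
noncomputable section

/-!
Evaluate `Jᵢ` at the mixed point `(πᵢ†, π₋ᵢ*, pᵢ*)`: optimality of player `i` at `z*` bounds
`Jᵢ(z*; R)` from above by its value there, and optimality of adversary `i` at `z†` bounds
`Jᵢ(z†; R')` from below by its value at `(πᵢ†, π₋ᵢ†, pᵢ*)`. In the difference of these two
values the regularizers `εᵢ νᵢ(πᵢ†)` cancel. Player 2 reduces to player 1 by exchanging the players.
-/

theorem mv_sub_left {m n : ℕ} (M N : Matrix (Fin m) (Fin n) ℝ) (x : Vec n) :
    mv (M - N) x = mv M x - mv N x := by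
  ext k
  simp [mv, sub_mul, Finset.sum_sub_distrib]

def Joint.swapPlayers {a₁ a₂ : ℕ} (z : Joint a₁ a₂) : Joint a₂ a₁ :=
  (z.2.1, z.1, z.2.2.2, z.2.2.1)

section

variable {a₁ a₂ : ℕ} {ε₁ ε₂ : ℝ} {ν₁ : Vec a₁ → ℝ} {ν₂ : Vec a₂ → ℝ}
  {D₁ : Vec a₂ → Vec a₂ → ℝ} {D₂ : Vec a₁ → Vec a₁ → ℝ}
  {R₁ R₁' : Matrix (Fin a₁) (Fin a₂) ℝ} {R₂ R₂' : Matrix (Fin a₂) (Fin a₁) ℝ}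
  {z z' : Joint a₁ a₂}

theorem J2_eq_J1_swapPlayers :
    J2 ε₂ ν₂ D₂ R₂ z = J1 ε₂ ν₂ D₂ R₂ z.swapPlayers :=
  rfl

theorem IsNash.swapPlayers (hz : IsNash ε₁ ε₂ ν₁ ν₂ D₁ D₂ R₁ R₂ z) :
    IsNash ε₂ ε₁ ν₂ ν₁ D₂ D₁ R₂ R₁ z.swapPlayers := by
  obtain ⟨⟨hπ₁, hπ₂, hp₁, hp₂⟩, hplayer₁, hplayer₂, hadv₁, hadv₂⟩ := hz
  exact ⟨⟨hπ₂, hπ₁, hp₂, hp₁⟩, hplayer₂, hplayer₁, hadv₂, hadv₁⟩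

theorem IsNash.J1_sub_le (hz : IsNash ε₁ ε₂ ν₁ ν₂ D₁ D₂ R₁ R₂ z)
    (hz' : IsNash ε₁ ε₂ ν₁ ν₂ D₁ D₂ R₁' R₂' z') :
    J1 ε₁ ν₁ D₁ R₁ z - J1 ε₁ ν₁ D₁ R₁' z'
      ≤ (inner ℝ z'.1 (mv (R₁' - R₁) z.2.2.1) : ℝ) - D₁ z.2.2.1 z.2.1 + D₁ z.2.2.1 z'.2.1 := by
  have hplayer := hz.2.1 z'.1 hz'.1.1
  have hadversary := hz'.2.2.2.1 z.2.2.1 hz.1.2.2.1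
  simp only [J1] at hplayer hadversary ⊢
  rw [mv_sub_left, inner_sub_right]
  linarith

end

theorem nash_value_comparison_general
    {a₁ a₂ : ℕ}
    (ε₁ ε₂ : ℝ)
    (ν₁ : Vec a₁ → ℝ) (ν₂ : Vec a₂ → ℝ)
    (D₁ : Vec a₂ → Vec a₂ → ℝ) (D₂ : Vec a₁ → Vec a₁ → ℝ)
    (R₁ R₁' : Matrix (Fin a₁) (Fin a₂) ℝ) (R₂ R₂' : Matrix (Fin a₂) (Fin a₁) ℝ)
    (zstar zdag : Joint a₁ a₂)
    (hzstar : IsNash ε₁ ε₂ ν₁ ν₂ D₁ D₂ R₁ R₂ zstar)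
    (hzdag : IsNash ε₁ ε₂ ν₁ ν₂ D₁ D₂ R₁' R₂' zdag) :
    J1 ε₁ ν₁ D₁ R₁ zstar - J1 ε₁ ν₁ D₁ R₁' zdag
        ≤ (inner ℝ zdag.1 (mv (R₁' - R₁) zstar.2.2.1) : ℝ)
            - D₁ zstar.2.2.1 zstar.2.1 + D₁ zstar.2.2.1 zdag.2.1
    ∧ J2 ε₂ ν₂ D₂ R₂ zstar - J2 ε₂ ν₂ D₂ R₂' zdag
        ≤ (inner ℝ zdag.2.1 (mv (R₂' - R₂) zstar.2.2.2) : ℝ)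
            - D₂ zstar.2.2.2 zstar.1 + D₂ zstar.2.2.2 zdag.1 := by
  refine ⟨hzstar.J1_sub_le hzdag, ?_⟩
  rw [J2_eq_J1_swapPlayers, J2_eq_J1_swapPlayers]
  exact hzstar.swapPlayers.J1_sub_le hzdag.swapPlayers

/-- If `z*` is a Nash equilibrium of the modified 4-player game for payoff
pair `R` and `z†` for payoff pair `R'`, then for each player
`Jᵢ(z*; R) − Jᵢ(z†; R') ≤ (πᵢ†)ᵀ(Rᵢ' − Rᵢ)pᵢ* − Dᵢ(pᵢ*, π₋ᵢ*) + Dᵢ(pᵢ*, π₋ᵢ†)`. -/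
theorem nash_value_comparison
    {a₁ a₂ : ℕ} (ha₁ : 1 ≤ a₁) (ha₂ : 1 ≤ a₂)
    (ε₁ ε₂ : ℝ) (hε₁ : 0 < ε₁) (hε₂ : 0 < ε₂)
    (ν₁ : Vec a₁ → ℝ) (ν₂ : Vec a₂ → ℝ)
    (D₁ : Vec a₂ → Vec a₂ → ℝ) (D₂ : Vec a₁ → Vec a₁ → ℝ)
    (R₁ R₁' : Matrix (Fin a₁) (Fin a₂) ℝ) (R₂ R₂' : Matrix (Fin a₂) (Fin a₁) ℝ)
    (zstar zdag : Joint a₁ a₂)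
    (hzstar : IsNash ε₁ ε₂ ν₁ ν₂ D₁ D₂ R₁ R₂ zstar)
    (hzdag : IsNash ε₁ ε₂ ν₁ ν₂ D₁ D₂ R₁' R₂' zdag) :
    J1 ε₁ ν₁ D₁ R₁ zstar - J1 ε₁ ν₁ D₁ R₁' zdag
        ≤ (inner ℝ zdag.1 (mv (R₁' - R₁) zstar.2.2.1) : ℝ)
            - D₁ zstar.2.2.1 zstar.2.1 + D₁ zstar.2.2.1 zdag.2.1
    ∧ J2 ε₂ ν₂ D₂ R₂ zstar - J2 ε₂ ν₂ D₂ R₂' zdag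
        ≤ (inner ℝ zdag.2.1 (mv (R₂' - R₂) zstar.2.2.2) : ℝ)
            - D₂ zstar.2.2.2 zstar.1 + D₂ zstar.2.2.2 zdag.1 :=
  nash_value_comparison_general ε₁ ε₂ ν₁ ν₂ D₁ D₂ R₁ R₁' R₂ R₂' zstar zdag hzstar hzdag
end
end

section
/- Let S and X be nonempty finite sets, γ ∈ [0, 1), K ≥ 0, r : S × X → ℝ, P : S × X → Δ_S, and for each (s, x) let D(·; s, x) : Δ_S → ℝ be bounded below. Let g : (X → ℝ) × (X → ℝ) → ℝ² be K-Lipschitz with respect to the sup norm on its domain and the sup norm on ℝ². For a pair of functions Q = (Q₁, Q₂) with Q_i : S × X → ℝ, define (T Q)_i(s, x) = r(s, x) + γ·inf_{P̃ ∈ Δ_S} { Σ_{s'} P̃(s')·g_i(Q₁(s', ·), Q₂(s', ·)) + D(P̃; s, x) }, where g_i denotes the i-th component of g. Then for all pairs Q, Q': max_{i,s,x} |(T Q)_i(s, x) − (T Q')_i(s, x)| ≤ γK·max_{i,s,x} |Q_i(s, x) − Q_i'(s, x)|. -/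
noncomputable section

/-- The risk-averse Bellman-type operator with per-state value map `g`:
`(T Q)ᵢ(s, x) = r(s, x) + γ · inf_{P̃ ∈ Δ_S} { ∑_{s'} P̃(s') gᵢ(Q₁(s',·), Q₂(s',·)) + D(P̃; s, x) }`. -/
def bellmanT {S X : Type*} [Fintype S] (γ : ℝ) (r : S × X → ℝ)
    (D : S → X → (S → ℝ) → ℝ) (g : (X → ℝ) × (X → ℝ) → ℝ × ℝ)
    (Q : (S × X → ℝ) × (S × X → ℝ)) : (S × X → ℝ) × (S × X → ℝ) :=
  (fun sx => r sx + γ * ⨅ Pt : stdSimplex ℝ S,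
      ((∑ s', (Pt : S → ℝ) s' * (g (fun a => Q.1 (s', a), fun a => Q.2 (s', a))).1)
        + D sx.1 sx.2 Pt),
   fun sx => r sx + γ * ⨅ Pt : stdSimplex ℝ S,
      ((∑ s', (Pt : S → ℝ) s' * (g (fun a => Q.1 (s', a), fun a => Q.2 (s', a))).2)
        + D sx.1 sx.2 Pt))

/-!
Both the inner expectation `V ↦ ∑ P̃(s') V(s')` and the infimum over `P̃` of a family of
functions are `1`-Lipschitz for the sup norm, the latter because the penalty `D` is the same on
both sides and cancels. Hence `Q ↦ (T Q)ᵢ(s, x)` is the composite of the `K`-Lipschitz map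
`Q ↦ (s' ↦ gᵢ(Q₁(s', ·), Q₂(s', ·)))` with `1`-Lipschitz maps, scaled by `γ`.
-/

theorem abs_ciInf_sub_ciInf_le {ι : Type*} {f f' : ι → ℝ} {c : ℝ}
    (hf : BddBelow (Set.range f)) (hf' : BddBelow (Set.range f')) (hc : 0 ≤ c)
    (h : ∀ i, |f i - f' i| ≤ c) :
    |(⨅ i, f i) - ⨅ i, f' i| ≤ c := by
  cases isEmpty_or_nonempty ι
  · simpa [Real.iInf_of_isEmpty] using hc
  rw [abs_sub_le_iff]
  exact ⟨sub_le_comm.2 <| le_ciInf fun i => by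
      linarith [ciInf_le hf i, (abs_sub_le_iff.mp (h i)).1],
    sub_le_comm.2 <| le_ciInf fun i => by
      linarith [ciInf_le hf' i, (abs_sub_le_iff.mp (h i)).2]⟩

theorem stdSimplex.abs_sum_mul_le_norm {S : Type*} [Fintype S] (w : stdSimplex ℝ S)
    (V : S → ℝ) : |∑ s, w s * V s| ≤ ‖V‖ :=
  calc |∑ s, w s * V s| ≤ ∑ s, |w s * V s| := Finset.abs_sum_le_sum_abs _ _
    _ ≤ ∑ s, w s * ‖V‖ := Finset.sum_le_sum fun s _ => by
        rw [abs_mul, abs_of_nonneg (stdSimplex.zero_le w s), ← Real.norm_eq_abs]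
        exact mul_le_mul_of_nonneg_left (norm_le_pi_norm V s) (stdSimplex.zero_le w s)
    _ = ‖V‖ := by rw [← Finset.sum_mul, stdSimplex.sum_eq_one w, one_mul]

section PenalizedExpectation

variable {S : Type*} [Fintype S]

def penalizedExpectation (D : (S → ℝ) → ℝ) (V : S → ℝ) : ℝ :=
  ⨅ w : stdSimplex ℝ S, (∑ s, w s * V s) + D w

theorem bddBelow_range_expectation_add {D : (S → ℝ) → ℝ}
    (hD : BddBelow (D '' stdSimplex ℝ S)) (V : S → ℝ) :
    BddBelow (Set.range fun w : stdSimplex ℝ S => (∑ s, w s * V s) + D w) := by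
  obtain ⟨m, hm⟩ := hD
  refine ⟨-‖V‖ + m, ?_⟩
  rintro _ ⟨w, rfl⟩
  dsimp only
  have hDw : m ≤ D w := hm (Set.mem_image_of_mem D w.2)
  linarith [neg_abs_le (∑ s, w s * V s), stdSimplex.abs_sum_mul_le_norm w V]

theorem abs_penalizedExpectation_sub_le {D : (S → ℝ) → ℝ}
    (hD : BddBelow (D '' stdSimplex ℝ S)) (V V' : S → ℝ) :
    |penalizedExpectation D V - penalizedExpectation D V'| ≤ ‖V - V'‖ := by
  refine abs_ciInf_sub_ciInf_le (bddBelow_range_expectation_add hD V)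
    (bddBelow_range_expectation_add hD V') (norm_nonneg _) fun w => ?_
  rw [add_sub_add_right_eq_sub, ← Finset.sum_sub_distrib]
  simp only [← mul_sub]
  exact stdSimplex.abs_sum_mul_le_norm w (V - V')

theorem norm_add_mul_penalizedExpectation_sub_le {X : Type*} [Fintype X] {γ : ℝ} (hγ : 0 ≤ γ)
    (r : S × X → ℝ) {D : S → X → (S → ℝ) → ℝ}
    (hD : ∀ s x, BddBelow (D s x '' stdSimplex ℝ S)) (V V' : S → ℝ) :
    ‖(fun sx : S × X => r sx + γ * penalizedExpectation (D sx.1 sx.2) V) -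
        fun sx => r sx + γ * penalizedExpectation (D sx.1 sx.2) V'‖ ≤ γ * ‖V - V'‖ := by
  refine (pi_norm_le_iff_of_nonneg (by positivity)).2 fun sx => ?_
  rw [Pi.sub_apply, add_sub_add_left_eq_sub, ← mul_sub, norm_mul, Real.norm_of_nonneg hγ]
  exact mul_le_mul_of_nonneg_left (abs_penalizedExpectation_sub_le (hD sx.1 sx.2) V V') hγ

end PenalizedExpectation

theorem norm_curry_le {α β E : Type*} [Fintype α] [Fintype β] [SeminormedAddCommGroup E]
    (F : α × β → E) (a : α) : ‖fun b => F (a, b)‖ ≤ ‖F‖ :=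
  (pi_norm_le_iff_of_nonneg (norm_nonneg F)).2 fun b => norm_le_pi_norm F (a, b)

theorem bellmanT_lipschitz_general
    {S X : Type*} [Fintype S] [Fintype X]
    (γ : ℝ) (hγ0 : 0 ≤ γ) (K : ℝ) (hK : 0 ≤ K)
    (r : S × X → ℝ)
    (D : S → X → (S → ℝ) → ℝ)
    (hD : ∀ s x, BddBelow ((fun Pt => D s x Pt) '' stdSimplex ℝ S))
    (g : (X → ℝ) × (X → ℝ) → ℝ × ℝ)
    (hg : ∀ u v : (X → ℝ) × (X → ℝ), ‖g u - g v‖ ≤ K * ‖u - v‖) :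
    ∀ Q Q' : (S × X → ℝ) × (S × X → ℝ),
      ‖bellmanT γ r D g Q - bellmanT γ r D g Q'‖ ≤ γ * K * ‖Q - Q'‖ := by
  intro Q Q'
  set V := fun s => g (fun x => Q.1 (s, x), fun x => Q.2 (s, x))
  set V' := fun s => g (fun x => Q'.1 (s, x), fun x => Q'.2 (s, x))
  -- the argument of `g u - g v` is the pair of slices at `s` of `Q - Q'`
  have hV : ∀ s, ‖V s - V' s‖ ≤ K * ‖Q - Q'‖ := fun s =>
    (hg _ _).trans <| mul_le_mul_of_nonneg_left
      (max_le_max (norm_curry_le (Q - Q').1 s) (norm_curry_le (Q - Q').2 s)) hK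
  have hKQ : 0 ≤ K * ‖Q - Q'‖ := by positivity
  rw [Prod.norm_def, mul_assoc]
  exact max_le
    ((norm_add_mul_penalizedExpectation_sub_le hγ0 r hD _ _).trans <| mul_le_mul_of_nonneg_left
      ((pi_norm_le_iff_of_nonneg hKQ).2 fun s => (norm_fst_le _).trans (hV s)) hγ0)
    ((norm_add_mul_penalizedExpectation_sub_le hγ0 r hD _ _).trans <| mul_le_mul_of_nonneg_left
      ((pi_norm_le_iff_of_nonneg hKQ).2 fun s => (norm_snd_le _).trans (hV s)) hγ0)

/-- If `g` is `K`-Lipschitz with respect to sup norms, the Bellman-type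
operator `T` satisfies `‖T Q − T Q'‖_∞ ≤ γ K ‖Q − Q'‖_∞` (norms here are the sup norms over
`i`, `s`, `x`). -/
theorem bellmanT_lipschitz
    {S X : Type*} [Fintype S] [Fintype X] [Nonempty S] [Nonempty X]
    (γ : ℝ) (hγ0 : 0 ≤ γ) (hγ1 : γ < 1) (K : ℝ) (hK : 0 ≤ K)
    (r : S × X → ℝ)
    (P : S × X → S → ℝ) (hP : ∀ sx, P sx ∈ stdSimplex ℝ S)
    (D : S → X → (S → ℝ) → ℝ)
    (hD : ∀ s x, BddBelow ((fun Pt => D s x Pt) '' stdSimplex ℝ S))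
    (g : (X → ℝ) × (X → ℝ) → ℝ × ℝ)
    (hg : ∀ u v : (X → ℝ) × (X → ℝ), ‖g u - g v‖ ≤ K * ‖u - v‖) :
    ∀ Q Q' : (S × X → ℝ) × (S × X → ℝ),
      ‖bellmanT γ r D g Q - bellmanT γ r D g Q'‖ ≤ γ * K * ‖Q - Q'‖ :=
  bellmanT_lipschitz_general γ hγ0 K hK r D hD g hg
end
end

section
/- Let (X, ‖·‖) be a complete normed real vector space, let c ∈ [0, 1), and let T : X → X satisfy ‖T u − T v‖ ≤ c‖u − v‖ for all u, v ∈ X, with fixed point u* (T u* = u*). Let (α_t)_{t≥0} be a sequence with α_t ≥ 0, Σ_{t=0}^∞ α_t = ∞ and Σ_{t=0}^∞ α_t² < ∞, and define the iteration u_0 ∈ X arbitrary, u_{t+1} = (1 − α_t)u_t + α_t·T(u_t). Then u_t converges to u* as t → ∞. -/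
/-!
Each damped step contracts the distance to `u*` by the factor `1 - (1 - c) αₜ`
once `αₜ ≤ 1`, which holds eventually because `∑ αₜ² < ∞` forces `αₜ → 0`. Bounding
`1 - x ≤ exp (-x)` and multiplying, the error after time `N` is at most
`exp (-(1 - c) ∑_{N ≤ i < t} αᵢ)` times the error at time `N`, which tends to `0` since `∑ αₜ = ∞`.
-/

open Filter Finset Real Topology

theorem norm_damped_step_sub_le {E : Type*} [SeminormedAddCommGroup E] [NormedSpace ℝ E]
    {T : E → E} {c a : ℝ} {x x₀ : E} (hT : ‖T x - T x₀‖ ≤ c * ‖x - x₀‖) (hfix : T x₀ = x₀)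
    (ha0 : 0 ≤ a) (ha1 : a ≤ 1) :
    ‖(1 - a) • x + a • T x - x₀‖ ≤ (1 - (1 - c) * a) * ‖x - x₀‖ := by
  have hsplit : (1 - a) • x + a • T x - x₀ = (1 - a) • (x - x₀) + a • (T x - T x₀) := by
    rw [hfix]; module
  calc ‖(1 - a) • x + a • T x - x₀‖
      ≤ ‖(1 - a) • (x - x₀)‖ + ‖a • (T x - T x₀)‖ := hsplit ▸ norm_add_le _ _
    _ = (1 - a) * ‖x - x₀‖ + a * ‖T x - T x₀‖ := by
      rw [norm_smul, norm_smul, Real.norm_of_nonneg (sub_nonneg.2 ha1), Real.norm_of_nonneg ha0]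
    _ ≤ (1 - a) * ‖x - x₀‖ + a * (c * ‖x - x₀‖) := by gcongr
    _ = (1 - (1 - c) * a) * ‖x - x₀‖ := by ring

theorem le_mul_exp_neg_sum_Ico_of_le_one_sub_mul {d a : ℕ → ℝ} {κ : ℝ} {N : ℕ}
    (hd : ∀ t, 0 ≤ d t) (hstep : ∀ t ≥ N, d (t + 1) ≤ (1 - κ * a t) * d t) :
    ∀ t ≥ N, d t ≤ d N * exp (-(κ * ∑ i ∈ Ico N t, a i)) := by
  intro t ht
  induction t, ht using Nat.le_induction with
  | base => simp
  | succ t ht ih =>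
    calc d (t + 1) ≤ (1 - κ * a t) * d t := hstep t ht
      _ ≤ exp (-(κ * a t)) * d t := by
        gcongr
        · exact hd t
        · linarith [add_one_le_exp (-(κ * a t))]
      _ ≤ exp (-(κ * a t)) * (d N * exp (-(κ * ∑ i ∈ Ico N t, a i))) := by gcongr
      _ = d N * exp (-(κ * ∑ i ∈ Ico N (t + 1), a i)) := by
        rw [sum_Ico_succ_top ht, mul_add, neg_add, exp_add]
        ring

theorem tendsto_zero_of_le_one_sub_mul {d a : ℕ → ℝ} {κ : ℝ} (hd : ∀ t, 0 ≤ d t) (hκ : 0 < κ)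
    (hdiv : Tendsto (fun n => ∑ t ∈ range n, a t) atTop atTop)
    (hstep : ∀ᶠ t in atTop, d (t + 1) ≤ (1 - κ * a t) * d t) :
    Tendsto d atTop (𝓝 0) := by
  obtain ⟨N, hN⟩ := eventually_atTop.1 hstep
  have hbound := le_mul_exp_neg_sum_Ico_of_le_one_sub_mul hd hN
  have hsum : Tendsto (fun t => κ * ∑ i ∈ Ico N t, a i) atTop atTop := by
    refine Tendsto.const_mul_atTop hκ ?_
    refine (tendsto_atTop_add_const_right _ (-∑ i ∈ range N, a i) hdiv).congr' ?_
    filter_upwards [eventually_ge_atTop N] with t ht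
    rw [sum_Ico_eq_sub _ ht, sub_eq_add_neg]
  have hexp : Tendsto (fun t => d N * exp (-(κ * ∑ i ∈ Ico N t, a i))) atTop (𝓝 0) := by
    simpa using (tendsto_exp_atBot.comp (tendsto_neg_atTop_atBot.comp hsum)).const_mul (d N)
  exact squeeze_zero' (Eventually.of_forall hd) (eventually_atTop.2 ⟨N, hbound⟩) hexp

theorem damped_fixed_point_iteration_converges_general
    {X : Type*} [NormedAddCommGroup X] [NormedSpace ℝ X]
    (c : ℝ) (hc1 : c < 1)
    (T : X → X) (hT : ∀ u v : X, ‖T u - T v‖ ≤ c * ‖u - v‖)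
    (ustar : X) (hfix : T ustar = ustar)
    (α : ℕ → ℝ) (hα0 : ∀ t, 0 ≤ α t)
    (hdiv : Filter.Tendsto (fun n => ∑ t ∈ Finset.range n, α t) Filter.atTop Filter.atTop)
    (hsq : Summable (fun t => (α t) ^ 2))
    (u : ℕ → X) (hu : ∀ t, u (t + 1) = (1 - α t) • u t + (α t) • T (u t)) :
    Filter.Tendsto u Filter.atTop (nhds ustar) := by
  have hα1 : ∀ᶠ t in atTop, α t ≤ 1 := by
    filter_upwards [hsq.tendsto_atTop_zero.eventually (ge_mem_nhds zero_lt_one)] with t ht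
    exact (sq_le_one_iff₀ (hα0 t)).1 ht
  refine tendsto_iff_norm_sub_tendsto_zero.2 <|
    tendsto_zero_of_le_one_sub_mul (fun t => norm_nonneg _) (sub_pos.2 hc1) hdiv ?_
  filter_upwards [hα1] with t ht
  rw [hu t]
  exact norm_damped_step_sub_le (hT _ _) hfix (hα0 t) ht

/-- Let `T` be a contraction with constant `c < 1` on a complete normed
real vector space, with fixed point `u*`. For step sizes `αₜ ≥ 0` with `∑ αₜ = ∞` and
`∑ αₜ² < ∞`, the damped iteration `u_{t+1} = (1 − αₜ) uₜ + αₜ T(uₜ)` converges to `u*`. -/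
theorem damped_fixed_point_iteration_converges
    {X : Type*} [NormedAddCommGroup X] [NormedSpace ℝ X] [CompleteSpace X]
    (c : ℝ) (hc0 : 0 ≤ c) (hc1 : c < 1)
    (T : X → X) (hT : ∀ u v : X, ‖T u - T v‖ ≤ c * ‖u - v‖)
    (ustar : X) (hfix : T ustar = ustar)
    (α : ℕ → ℝ) (hα0 : ∀ t, 0 ≤ α t)
    (hdiv : Filter.Tendsto (fun n => ∑ t ∈ Finset.range n, α t) Filter.atTop Filter.atTop)
    (hsq : Summable (fun t => (α t) ^ 2))
    (u : ℕ → X) (hu : ∀ t, u (t + 1) = (1 - α t) • u t + (α t) • T (u t)) :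
    Filter.Tendsto u Filter.atTop (nhds ustar) :=
  damped_fixed_point_iteration_converges_general c hc1 T hT ustar hfix α hα0 hdiv hsq u hu
end
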